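/- arXiv:2211.04511 — 5 statements merged into one kernel-verified Lean document; each statement's English description precedes it below -/
import Mathlib

section
/- Let q be a prime power, let 3 ≤ k ≤ q/2, let α = (α_1,…,α_{2k}) ∈ F_q^{2k} have pairwise distinct entries, let v = (v_1,…,v_{2k}) with all v_j ∈ F_q^*, let η ∈ F_q^*, and set u_j = −∏_{1≤i≤2k, i≠j} (α_j − α_i)^{−1} for j = 1,…,2k. Then the (+)-ETGRS code C_{k,2k}(α,v,η,∞) (of length 2k+1) is almost self-dual if and only if there exists λ ∈ F_q^* such that λ·η·(2 + η·S_α) = 1 and λ·u_j = v_j² for all j = 1,…,2k. -/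
open Polynomial

noncomputable section

variable {F : Type*} [Field F]

/-- The dual of a code `C ⊆ F^N` under the standard bilinear form. -/
def dualCode {N : ℕ} (C : Set (Fin N → F)) : Set (Fin N → F) :=
  { x | ∀ c ∈ C, ∑ i, x i * c i = 0 }

/-- A code is self-orthogonal if it is contained in its dual. -/
def selfOrthogonal {N : ℕ} (C : Set (Fin N → F)) : Prop := C ⊆ dualCode C

/-- The Schur square of a code: the linear span of coordinatewise products of codewords. -/
def schurSq {N : ℕ} (C : Set (Fin N → F)) : Set (Fin N → F) :=
  ↑(Submodule.span F {x : Fin N → F | ∃ c1 ∈ C, ∃ c2 ∈ C, x = c1 * c2})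

/-- The dimension of (the span of) a code. -/
def codeDim {N : ℕ} (C : Set (Fin N → F)) : ℕ :=
  Module.finrank F (Submodule.span F C)

/-- The minimum Hamming weight of a nonzero codeword. -/
def minWt {N : ℕ} [DecidableEq F] (C : Set (Fin N → F)) : ℕ :=
  sInf {w | ∃ c ∈ C, c ≠ 0 ∧ hammingNorm c = w}

/-- A code of length `N` is MDS if its minimum distance is `N - dim + 1`. -/
def isMDS {N : ℕ} [DecidableEq F] (C : Set (Fin N → F)) : Prop :=
  minWt C = N - codeDim C + 1

/-- A code of length `N` is almost MDS (AMDS) if its minimum distance is `N - dim`. -/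
def isAMDS {N : ℕ} [DecidableEq F] (C : Set (Fin N → F)) : Prop :=
  minWt C = N - codeDim C

/-- A code is near MDS (NMDS) if both it and its dual are AMDS. -/
def isNMDS {N : ℕ} [DecidableEq F] (C : Set (Fin N → F)) : Prop :=
  isAMDS C ∧ isAMDS (dualCode C)

/-- A code of odd length `N` is almost self-dual if it is self-orthogonal of
dimension `(N-1)/2`. -/
def almostSelfDual {N : ℕ} (C : Set (Fin N → F)) : Prop :=
  selfOrthogonal C ∧ Odd N ∧ codeDim C = (N - 1) / 2

/-- `Nsub t b D` is the number of `t`-element subsets of `D` whose sum is `b`. -/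
def Nsub (t : ℕ) (b : F) (D : Set F) : ℕ :=
  Set.ncard {A : Finset F | ↑A ⊆ D ∧ A.card = t ∧ ∑ x ∈ A, x = b}

/-- The (+)-twisted generalized Reed–Solomon code `C_{k,n}(α,v,η)`.  The twisted
polynomial space `V_{k,1,k-1,η}` consists exactly of the polynomials `f` with
`deg f ≤ k` and `f_k = η f_{k-1}`. -/
def TGRS (k n : ℕ) (α v : Fin n → F) (η : F) : Set (Fin n → F) :=
  { c | ∃ f : F[X], f.natDegree ≤ k ∧ f.coeff k = η * f.coeff (k - 1) ∧
      c = fun j => v j * f.eval (α j) }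

/-- The (+)-extended twisted generalized Reed–Solomon code `C_{k,n}(α,v,η,∞)`. -/
def ETGRS (k n : ℕ) (α v : Fin n → F) (η : F) : Set (Fin (n + 1) → F) :=
  { c | ∃ f : F[X], f.natDegree ≤ k ∧ f.coeff k = η * f.coeff (k - 1) ∧
      c = Fin.snoc (fun j => v j * f.eval (α j)) (f.coeff (k - 1)) }

/-- The generalized Reed–Solomon code `GRS_{k,N}(β,w)`. -/
def GRS (k N : ℕ) (β w : Fin N → F) : Set (Fin N → F) :=
  { c | ∃ f : F[X], f.natDegree ≤ k - 1 ∧ c = fun j => w j * f.eval (β j) }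

/-- The extended generalized Reed–Solomon code `GRS_{k,N}(β,w,∞)`. -/
def EGRS (k N : ℕ) (β w : Fin N → F) : Set (Fin (N + 1) → F) :=
  { c | ∃ f : F[X], f.natDegree ≤ k - 1 ∧
      c = Fin.snoc (fun j => w j * f.eval (β j)) (f.coeff (k - 1)) }

end

/-! ### Auxiliary lemmas for the proof of `stmt15`. -/

namespace Stmt15Aux

open Finset

variable {F : Type*} [Field F]

lemma coeff_lagrange_basis {n : ℕ} (α : Fin n → F) (j : Fin n) :
    (Lagrange.basis Finset.univ α j).coeff (n - 1) =
      ∏ i ∈ Finset.univ.erase j, (α j - α i)⁻¹ := by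
  have hcard : (Finset.univ.erase j).card = n - 1 := by
    rw [Finset.card_erase_of_mem (Finset.mem_univ j), Finset.card_univ, Fintype.card_fin]
  unfold Lagrange.basis Lagrange.basisDivisor
  rw [Finset.prod_mul_distrib, ← map_prod, Polynomial.coeff_C_mul]
  have hmon : (∏ i ∈ Finset.univ.erase j, (X - C (α i))).Monic :=
    monic_prod_of_monic _ _ fun i _ => monic_X_sub_C _
  have hdeg : (∏ i ∈ Finset.univ.erase j, (X - C (α i))).natDegree = n - 1 := by
    rw [Polynomial.natDegree_prod_of_monic _ _ (fun i _ => monic_X_sub_C _)]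
    simp [hcard]
  rw [← hdeg, hmon.coeff_natDegree, mul_one]

lemma lagrange_coeff_eq_sum {n : ℕ} (α : Fin n → F) (hα : Function.Injective α)
    {p : F[X]} (hp : p.degree < n) :
    p.coeff (n - 1) = ∑ j, p.eval (α j) * ∏ i ∈ Finset.univ.erase j, (α j - α i)⁻¹ := by
  have hinj : Set.InjOn α ↑(Finset.univ : Finset (Fin n)) := Function.Injective.injOn hα
  have h := Lagrange.eq_interpolate (s := Finset.univ) hinj (by simpa using hp)
  conv_lhs => rw [h]
  rw [Lagrange.interpolate_apply, Polynomial.finset_sum_coeff]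
  refine Finset.sum_congr rfl fun j _ => ?_
  rw [Polynomial.coeff_C_mul, coeff_lagrange_basis α j]

lemma key_sum {n : ℕ} (hn : 1 ≤ n) (α : Fin n → F) (hα : Function.Injective α)
    {h : F[X]} (hdeg : h.natDegree ≤ n) :
    ∑ j, h.eval (α j) * ∏ i ∈ Finset.univ.erase j, (α j - α i)⁻¹ =
      h.coeff (n - 1) + h.coeff n * ∑ i, α i := by
  set P : F[X] := ∏ i : Fin n, (X - Polynomial.C (α i)) with hP
  have hPmonic : P.Monic := monic_prod_of_monic _ _ fun i _ => monic_X_sub_C _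
  have hPdeg : P.natDegree = n := by
    rw [hP, Polynomial.natDegree_prod_of_monic _ _ (fun i _ => monic_X_sub_C _)]
    simp
  set q : F[X] := h - Polynomial.C (h.coeff n) * P with hq
  have hqcoeff : ∀ m, n ≤ m → q.coeff m = 0 := by
    intro m hm
    rcases eq_or_lt_of_le hm with rfl | hlt
    · have h1 : P.coeff n = 1 := by rw [← hPdeg]; exact hPmonic.coeff_natDegree
      simp [hq, Polynomial.coeff_C_mul, h1]
    · have h1 : h.coeff m = 0 :=
        Polynomial.coeff_eq_zero_of_natDegree_lt (lt_of_le_of_lt hdeg hlt)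
      have h2 : (Polynomial.C (h.coeff n) * P).coeff m = 0 :=
        Polynomial.coeff_eq_zero_of_natDegree_lt
          (lt_of_le_of_lt ((Polynomial.natDegree_C_mul_le _ _).trans hPdeg.le) hlt)
      simp [hq, h1, h2]
  have hqdeg : q.degree < n := (Polynomial.degree_lt_iff_coeff_zero q n).mpr
    (fun m hm => hqcoeff m (by exact_mod_cast hm))
  have heval : ∀ j, q.eval (α j) = h.eval (α j) := by
    intro j
    have : P.eval (α j) = 0 := by
      rw [hP, Polynomial.eval_prod]
      exact Finset.prod_eq_zero (Finset.mem_univ j) (by simp)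
    simp [hq, this]
  have hPnext : P.coeff (n - 1) = -∑ i, α i := by
    have h1 : P.nextCoeff = ∑ i : Fin n, (X - Polynomial.C (α i)).nextCoeff :=
      Polynomial.Monic.nextCoeff_prod _ _ (fun i _ => monic_X_sub_C _)
    have h2 : P.nextCoeff = P.coeff (n - 1) := by
      rw [Polynomial.nextCoeff_of_natDegree_pos (by omega), hPdeg]
    rw [← h2, h1]
    simp [Polynomial.nextCoeff_X_sub_C]
  have hA := lagrange_coeff_eq_sum α hα hqdeg
  have hqc : q.coeff (n - 1) = h.coeff (n - 1) + h.coeff n * ∑ i, α i := by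
    simp only [hq, Polynomial.coeff_sub, Polynomial.coeff_C_mul, hPnext]
    ring
  calc ∑ j, h.eval (α j) * ∏ i ∈ Finset.univ.erase j, (α j - α i)⁻¹
      = ∑ j, q.eval (α j) * ∏ i ∈ Finset.univ.erase j, (α j - α i)⁻¹ := by
        refine Finset.sum_congr rfl fun j _ => by rw [heval]
    _ = q.coeff (n - 1) := hA.symm
    _ = _ := hqc

lemma prop_const {n : ℕ} (hn : 2 ≤ n) (α : Fin n → F) (hα : Function.Injective α)
    (x : Fin n → F) (hx : ∀ m, m ≤ n - 2 → ∑ j, x j * α j ^ m = 0) (a b : Fin n) :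
    x a * ∏ i ∈ Finset.univ.erase a, (α a - α i) =
      x b * ∏ i ∈ Finset.univ.erase b, (α b - α i) := by
  rcases eq_or_ne a b with rfl | hab
  · rfl
  have hbmem : b ∈ Finset.univ.erase a := Finset.mem_erase.mpr ⟨hab.symm, Finset.mem_univ b⟩
  have hamem : a ∈ Finset.univ.erase b := Finset.mem_erase.mpr ⟨hab, Finset.mem_univ a⟩
  set s : Finset (Fin n) := (Finset.univ.erase a).erase b with hs
  set g : F[X] := ∏ i ∈ s, (X - Polynomial.C (α i)) with hg
  have hscard : s.card = n - 2 := by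
    rw [hs, Finset.card_erase_of_mem hbmem, Finset.card_erase_of_mem (Finset.mem_univ a)]
    simp only [Finset.card_univ, Fintype.card_fin]
    omega
  have hgdeg : g.natDegree = n - 2 := by
    rw [hg, Polynomial.natDegree_prod_of_monic _ _ (fun i _ => monic_X_sub_C _)]
    simp [hscard]
  have hglt : g.natDegree < n - 1 := by omega
  have h1 : ∑ j, x j * g.eval (α j) = 0 := by
    calc ∑ j, x j * g.eval (α j)
        = ∑ j, ∑ m ∈ Finset.range (n - 1), g.coeff m * (x j * α j ^ m) := by
          refine Finset.sum_congr rfl fun j _ => ?_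
          rw [Polynomial.eval_eq_sum_range' hglt, Finset.mul_sum]
          exact Finset.sum_congr rfl fun m _ => by ring
      _ = ∑ m ∈ Finset.range (n - 1), ∑ j, g.coeff m * (x j * α j ^ m) := Finset.sum_comm
      _ = 0 := by
          refine Finset.sum_eq_zero fun m hm => ?_
          rw [← Finset.mul_sum, hx m (by have := Finset.mem_range.mp hm; omega), mul_zero]
  have hzero : ∀ j ∈ (Finset.univ : Finset (Fin n)), j ∉ ({a, b} : Finset (Fin n)) →
      x j * g.eval (α j) = 0 := by
    intro j _ hj
    simp only [Finset.mem_insert, Finset.mem_singleton, not_or] at hj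
    have hjs : j ∈ s := by
      rw [hs]
      exact Finset.mem_erase.mpr ⟨hj.2, Finset.mem_erase.mpr ⟨hj.1, Finset.mem_univ j⟩⟩
    have : g.eval (α j) = 0 := by
      rw [hg, Polynomial.eval_prod]
      exact Finset.prod_eq_zero hjs (by simp)
    rw [this, mul_zero]
  have h2 : x a * g.eval (α a) + x b * g.eval (α b) = 0 := by
    have := Finset.sum_subset (Finset.subset_univ ({a, b} : Finset (Fin n))) hzero
    rw [h1] at this
    rw [← this, Finset.sum_pair hab]
  have hga : (α a - α b) * g.eval (α a) = ∏ i ∈ Finset.univ.erase a, (α a - α i) := by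
    rw [hg, Polynomial.eval_prod]
    simp only [Polynomial.eval_sub, Polynomial.eval_X, Polynomial.eval_C]
    exact Finset.mul_prod_erase (Finset.univ.erase a) (fun i => α a - α i) hbmem
  have hgb : (α b - α a) * g.eval (α b) = ∏ i ∈ Finset.univ.erase b, (α b - α i) := by
    rw [hg, Polynomial.eval_prod]
    simp only [Polynomial.eval_sub, Polynomial.eval_X, Polynomial.eval_C]
    rw [hs, Finset.erase_right_comm]
    exact Finset.mul_prod_erase (Finset.univ.erase b) (fun i => α b - α i) hamem
  have key : x a * ((α a - α b) * g.eval (α a)) - x b * ((α b - α a) * g.eval (α b))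
      = (α a - α b) * (x a * g.eval (α a) + x b * g.eval (α b)) := by ring
  rw [h2, mul_zero, sub_eq_zero] at key
  rw [← hga, ← hgb, key]

lemma coeff_mul_high {k : ℕ} {f g : F[X]} (hf : f.natDegree ≤ k) (hg : g.natDegree ≤ k) :
    (f * g).coeff (2 * k) = f.coeff k * g.coeff k := by
  rw [Polynomial.coeff_mul]
  rw [Finset.sum_eq_single ((k, k) : ℕ × ℕ)]
  · rintro ⟨p1, p2⟩ hmem hne
    rw [Finset.HasAntidiagonal.mem_antidiagonal] at hmem
    by_cases h1 : p1 ≤ k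
    · by_cases h2 : p2 ≤ k
      · exact absurd (by constructor <;> omega : p1 = k ∧ p2 = k)
          (by simpa [Prod.ext_iff] using hne)
      · rw [Polynomial.coeff_eq_zero_of_natDegree_lt (lt_of_le_of_lt hg (by omega)), mul_zero]
    · rw [Polynomial.coeff_eq_zero_of_natDegree_lt (lt_of_le_of_lt hf (by omega)), zero_mul]
  · intro h
    exact absurd (Finset.HasAntidiagonal.mem_antidiagonal.mpr (by ring)) h

lemma coeff_mul_next {k : ℕ} (hk : 1 ≤ k) {f g : F[X]}
    (hf : f.natDegree ≤ k) (hg : g.natDegree ≤ k) :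
    (f * g).coeff (2 * k - 1) =
      f.coeff (k - 1) * g.coeff k + f.coeff k * g.coeff (k - 1) := by
  rw [Polynomial.coeff_mul]
  have hsub : ({(k - 1, k), (k, k - 1)} : Finset (ℕ × ℕ)) ⊆
      Finset.HasAntidiagonal.antidiagonal (2 * k - 1) := by
    intro p hp
    simp only [Finset.mem_insert, Finset.mem_singleton] at hp
    rcases hp with rfl | rfl <;> rw [Finset.HasAntidiagonal.mem_antidiagonal] <;> omega
  rw [← Finset.sum_subset hsub]
  · rw [Finset.sum_pair (by intro hcontra; rw [Prod.mk.injEq] at hcontra; omega)]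
  · rintro ⟨p1, p2⟩ hmem hnot
    rw [Finset.HasAntidiagonal.mem_antidiagonal] at hmem
    simp only [Finset.mem_insert, Finset.mem_singleton, Prod.ext_iff] at hnot
    push_neg at hnot
    by_cases h1 : p1 ≤ k
    · by_cases h2 : p2 ≤ k
      · exfalso
        obtain ⟨ha, hb⟩ := hnot
        have hcase : (p1 = k - 1 ∧ p2 = k) ∨ (p1 = k ∧ p2 = k - 1) := by omega
        rcases hcase with ⟨h3, h4⟩ | ⟨h3, h4⟩
        · exact ha h3 h4
        · exact hb h3 h4
      · rw [Polynomial.coeff_eq_zero_of_natDegree_lt (lt_of_le_of_lt hg (by omega)), mul_zero]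
    · rw [Polynomial.coeff_eq_zero_of_natDegree_lt (lt_of_le_of_lt hf (by omega)), zero_mul]

lemma snoc_pair_sum {n : ℕ} (y z : Fin n → F) (s t : F) :
    ∑ i, (Fin.snoc y s : Fin (n + 1) → F) i * (Fin.snoc z t : Fin (n + 1) → F) i
      = (∑ j, y j * z j) + s * t := by
  rw [Fin.sum_univ_castSucc]
  simp

/-! ### The parametrizing linear map and the dimension of the code -/

/-- The polynomial `∑ aᵢ Xⁱ + η a_{k-1} X^k` attached to a coefficient vector. -/
noncomputable def polyOf (η : F) {k : ℕ} (hk : 0 < k) (a : Fin k → F) : F[X] :=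
  (∑ i : Fin k, Polynomial.C (a i) * X ^ (i : ℕ)) +
    Polynomial.C (η * a ⟨k - 1, Nat.sub_lt hk Nat.one_pos⟩) * X ^ k

lemma polyOf_coeff_lt (η : F) {k : ℕ} (hk : 0 < k) (a : Fin k → F) {m : ℕ} (hm : m < k) :
    (polyOf η hk a).coeff m = a ⟨m, hm⟩ := by
  unfold polyOf
  rw [Polynomial.coeff_add, Polynomial.finset_sum_coeff]
  simp only [Polynomial.coeff_C_mul, Polynomial.coeff_X_pow]
  rw [Finset.sum_eq_single (⟨m, hm⟩ : Fin k)]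
  · simp [hm.ne]
  · intro i _ hne
    have : m ≠ (i : ℕ) := by
      intro h
      exact hne (by ext; simp [← h])
    simp [this]
  · simp

lemma polyOf_coeff_k (η : F) {k : ℕ} (hk : 0 < k) (a : Fin k → F) :
    (polyOf η hk a).coeff k = η * a ⟨k - 1, Nat.sub_lt hk Nat.one_pos⟩ := by
  unfold polyOf
  rw [Polynomial.coeff_add, Polynomial.finset_sum_coeff]
  have h1 : ∀ i ∈ (Finset.univ : Finset (Fin k)),
      (Polynomial.C (a i) * X ^ (i : ℕ)).coeff k = 0 := by
    intro i _
    have : k ≠ (i : ℕ) := fun h => absurd i.isLt (by omega)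
    simp [Polynomial.coeff_X_pow, this]
  rw [Finset.sum_eq_zero h1, zero_add]
  simp [Polynomial.coeff_C_mul, Polynomial.coeff_X_pow, mul_assoc]

lemma polyOf_coeff_gt (η : F) {k : ℕ} (hk : 0 < k) (a : Fin k → F) {m : ℕ} (hm : k < m) :
    (polyOf η hk a).coeff m = 0 := by
  unfold polyOf
  rw [Polynomial.coeff_add, Polynomial.finset_sum_coeff]
  have h1 : ∀ i ∈ (Finset.univ : Finset (Fin k)),
      (Polynomial.C (a i) * X ^ (i : ℕ)).coeff m = 0 := by
    intro i _
    have : m ≠ (i : ℕ) := fun h => absurd i.isLt (by omega)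
    simp [Polynomial.coeff_X_pow, this]
  rw [Finset.sum_eq_zero h1, zero_add]
  simp [Polynomial.coeff_C_mul, Polynomial.coeff_X_pow, hm.ne', mul_assoc]

lemma polyOf_natDegree_le (η : F) {k : ℕ} (hk : 0 < k) (a : Fin k → F) :
    (polyOf η hk a).natDegree ≤ k :=
  Polynomial.natDegree_le_iff_coeff_eq_zero.mpr fun _ hm => polyOf_coeff_gt η hk a hm

lemma polyOf_eq (η : F) {k : ℕ} (hk : 0 < k) (f : Polynomial F)
    (hdeg : f.natDegree ≤ k) (hcoeff : f.coeff k = η * f.coeff (k - 1)) :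
    polyOf η hk (fun i => f.coeff i) = f := by
  ext m
  rcases lt_trichotomy m k with hm | rfl | hm
  · rw [polyOf_coeff_lt η hk _ hm]
  · rw [polyOf_coeff_k η hk]
    exact hcoeff.symm
  · rw [polyOf_coeff_gt η hk _ hm]
    exact (Polynomial.coeff_eq_zero_of_natDegree_lt (lt_of_le_of_lt hdeg hm)).symm

lemma polyOf_add (η : F) {k : ℕ} (hk : 0 < k) (a b : Fin k → F) :
    polyOf η hk (a + b) = polyOf η hk a + polyOf η hk b := by
  ext m
  rcases lt_trichotomy m k with hm | rfl | hm
  · simp [polyOf_coeff_lt η hk _ hm]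
  · simp [polyOf_coeff_k η hk]
    ring
  · simp [polyOf_coeff_gt η hk _ hm]

lemma polyOf_smul (η : F) {k : ℕ} (hk : 0 < k) (c : F) (a : Fin k → F) :
    polyOf η hk (c • a) = Polynomial.C c * polyOf η hk a := by
  ext m
  rcases lt_trichotomy m k with hm | rfl | hm
  · simp [polyOf_coeff_lt η hk _ hm]
  · simp [polyOf_coeff_k η hk]
    ring
  · simp [polyOf_coeff_gt η hk _ hm]

/-- The linear parametrization of the (+)-ETGRS code. -/
noncomputable def etgrsMap (k : ℕ) (hk : 0 < k) (α v : Fin (2 * k) → F) (η : F) :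
    (Fin k → F) →ₗ[F] (Fin (2 * k + 1) → F) where
  toFun a := Fin.snoc (fun j => v j * (polyOf η hk a).eval (α j))
    (a ⟨k - 1, Nat.sub_lt hk Nat.one_pos⟩)
  map_add' a b := by
    funext i
    refine Fin.lastCases ?_ (fun j => ?_) i
    · simp [Fin.snoc_last]
    · simp [Fin.snoc_castSucc, polyOf_add η hk]
      ring
  map_smul' c a := by
    funext i
    refine Fin.lastCases ?_ (fun j => ?_) i
    · simp [Fin.snoc_last]
    · simp [Fin.snoc_castSucc, polyOf_smul η hk]
      ring

lemma ETGRS_eq_range {k : ℕ} (hk : 0 < k) (α v : Fin (2 * k) → F) (η : F) :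
    ETGRS k (2 * k) α v η = ↑(LinearMap.range (etgrsMap k hk α v η)) := by
  ext c
  constructor
  · rintro ⟨f, hdeg, hcoeff, rfl⟩
    refine ⟨fun i => f.coeff i, ?_⟩
    have hpoly : polyOf η hk (fun i : Fin k => f.coeff ↑i) = f := polyOf_eq η hk f hdeg hcoeff
    simp only [etgrsMap, LinearMap.coe_mk, AddHom.coe_mk, hpoly]
  · rintro ⟨a, rfl⟩
    refine ⟨polyOf η hk a, polyOf_natDegree_le η hk a, ?_, ?_⟩
    · rw [polyOf_coeff_k η hk, polyOf_coeff_lt η hk a (Nat.sub_lt hk Nat.one_pos)]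
    · simp only [etgrsMap, LinearMap.coe_mk, AddHom.coe_mk]
      rw [polyOf_coeff_lt η hk a (Nat.sub_lt hk Nat.one_pos)]

lemma etgrsMap_injective {k : ℕ} (hk : 0 < k) (α v : Fin (2 * k) → F)
    (hα : Function.Injective α) (hv : ∀ j, v j ≠ 0) (η : F) :
    Function.Injective (etgrsMap k hk α v η) := by
  classical
  rw [injective_iff_map_eq_zero]
  intro a ha
  have heval : ∀ j : Fin (2 * k), (polyOf η hk a).eval (α j) = 0 := by
    intro j
    have := congrFun ha (Fin.castSucc j)
    simp only [etgrsMap, LinearMap.coe_mk, AddHom.coe_mk, Fin.snoc_castSucc, Pi.zero_apply] at this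
    exact (mul_eq_zero.mp this).resolve_left (hv j)
  have hzero : polyOf η hk a = 0 := by
    apply Polynomial.eq_zero_of_degree_lt_of_eval_finset_eq_zero
      (Finset.image α Finset.univ)
    · rw [Finset.card_image_of_injective _ hα, Finset.card_univ, Fintype.card_fin]
      calc (polyOf η hk a).degree ≤ ((polyOf η hk a).natDegree : WithBot ℕ) :=
            Polynomial.degree_le_natDegree
        _ ≤ (k : WithBot ℕ) := by exact_mod_cast polyOf_natDegree_le η hk a
        _ < ((2 * k : ℕ) : WithBot ℕ) := by exact_mod_cast (by omega : k < 2 * k)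
    · intro x hx
      obtain ⟨j, _, rfl⟩ := Finset.mem_image.mp hx
      exact heval j
  funext i
  have := polyOf_coeff_lt η hk a i.isLt
  rw [hzero, Polynomial.coeff_zero] at this
  simpa using this.symm

lemma codeDim_ETGRS {k : ℕ} (hk : 0 < k) (α v : Fin (2 * k) → F)
    (hα : Function.Injective α) (hv : ∀ j, v j ≠ 0) (η : F) :
    codeDim (ETGRS k (2 * k) α v η) = k := by
  rw [codeDim, ETGRS_eq_range hk α v η, Submodule.span_eq,
    LinearMap.finrank_range_of_inj (etgrsMap_injective hk α v hα hv η)]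
  simp [Module.finrank_fin_fun]

end Stmt15Aux

/-- almost-self-duality criterion for (+)-ETGRS codes of length `2k+1`. -/
theorem stmt15 {F : Type*} [Field F] [Fintype F] [DecidableEq F] {k : ℕ}
    (hk : 3 ≤ k) (hk2 : 2 * k ≤ Fintype.card F)
    (α : Fin (2 * k) → F) (hα : Function.Injective α)
    (v : Fin (2 * k) → F) (hv : ∀ j, v j ≠ 0)
    (η : F) (hη : η ≠ 0)
    (u : Fin (2 * k) → F)
    (hu : ∀ j, u j = -∏ i ∈ Finset.univ.erase j, (α j - α i)⁻¹) :
    almostSelfDual (ETGRS k (2 * k) α v η) ↔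
      ∃ lam : F, lam ≠ 0 ∧ lam * η * (2 + η * ∑ i, α i) = 1 ∧
        ∀ j, lam * u j = v j ^ 2 := by
  have hk0 : 0 < k := by omega
  have hW0 : ∀ j : Fin (2 * k), (∏ i ∈ Finset.univ.erase j, (α j - α i)) ≠ 0 := by
    intro j
    refine Finset.prod_ne_zero_iff.mpr fun i hi => ?_
    exact sub_ne_zero.mpr fun h => (Finset.mem_erase.mp hi).1 (hα h).symm
  have hWinv : ∀ j : Fin (2 * k), ∏ i ∈ Finset.univ.erase j, (α j - α i)⁻¹ =
      (∏ i ∈ Finset.univ.erase j, (α j - α i))⁻¹ := fun j =>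
    Finset.prod_inv_distrib _
  have hmemb : ∀ f : Polynomial F, f.natDegree ≤ k → f.coeff k = η * f.coeff (k - 1) →
      (Fin.snoc (fun j => v j * f.eval (α j)) (f.coeff (k - 1)) : Fin (2 * k + 1) → F) ∈
        ETGRS k (2 * k) α v η :=
    fun f h1 h2 => ⟨f, h1, h2, rfl⟩
  constructor
  · intro hasd
    obtain ⟨hso, -, -⟩ := hasd
    have hpair : ∀ f g : Polynomial F, f.natDegree ≤ k → f.coeff k = η * f.coeff (k - 1) →
        g.natDegree ≤ k → g.coeff k = η * g.coeff (k - 1) →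
        (∑ j, (v j * f.eval (α j)) * (v j * g.eval (α j))) +
          f.coeff (k - 1) * g.coeff (k - 1) = 0 := by
      intro f g hf1 hf2 hg1 hg2
      have h1 := hso (hmemb f hf1 hf2) _ (hmemb g hg1 hg2)
      rwa [Stmt15Aux.snoc_pair_sum] at h1
    set c : ℕ → F := fun m => ∑ j, v j ^ 2 * α j ^ m with hc
    have hps : ∀ s t : ℕ, s ≤ k - 2 → t ≤ k - 2 → c (s + t) = 0 := by
      intro s t hs ht
      have hs' : ¬(k - 1 = s) := by omega
      have ht' : ¬(k - 1 = t) := by omega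
      have h := hpair (X ^ s) (X ^ t)
        (by rw [Polynomial.natDegree_X_pow]; omega)
        (by rw [Polynomial.coeff_X_pow, Polynomial.coeff_X_pow, if_neg (by omega : ¬(k = s)),
              if_neg hs', mul_zero])
        (by rw [Polynomial.natDegree_X_pow]; omega)
        (by rw [Polynomial.coeff_X_pow, Polynomial.coeff_X_pow, if_neg (by omega : ¬(k = t)),
              if_neg ht', mul_zero])
      simp only [Polynomial.eval_pow, Polynomial.eval_X, Polynomial.coeff_X_pow, if_neg hs',
        if_neg ht', mul_zero, zero_mul, add_zero] at h
      calc c (s + t) = ∑ j, (v j * α j ^ s) * (v j * α j ^ t) := by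
            simp only [hc]
            exact Finset.sum_congr rfl fun j _ => by rw [pow_add]; ring
        _ = 0 := h
    have hlow : ∀ m : ℕ, m ≤ 2 * k - 4 → c m = 0 := by
      intro m hm
      by_cases hmk : m ≤ k - 2
      · have h := hps m 0 hmk (by omega)
        simpa using h
      · have h := hps (k - 2) (m - (k - 2)) le_rfl (by omega)
        rwa [Nat.add_sub_cancel' (by omega)] at h
    set gtw : Polynomial F := X ^ (k - 1) + Polynomial.C η * X ^ k with hgtw
    have hgdeg : gtw.natDegree ≤ k := by
      rw [hgtw]
      refine (Polynomial.natDegree_add_le _ _).trans (max_le ?_ ?_)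
      · rw [Polynomial.natDegree_X_pow]; omega
      · exact (Polynomial.natDegree_C_mul_le _ _).trans (le_of_eq (Polynomial.natDegree_X_pow k))
    have hgc : ∀ m : ℕ, gtw.coeff m =
        (if m = k - 1 then 1 else 0) + η * (if m = k then 1 else 0) := by
      intro m
      rw [hgtw]
      simp [Polynomial.coeff_add, Polynomial.coeff_C_mul, Polynomial.coeff_X_pow]
    have hgck : gtw.coeff k = η * gtw.coeff (k - 1) := by
      rw [hgc, hgc, if_neg (by omega), if_pos rfl, if_pos rfl, if_neg (by omega)]
      ring
    have hgc1 : gtw.coeff (k - 1) = 1 := by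
      rw [hgc, if_pos rfl, if_neg (by omega)]
      ring
    have hgeval : ∀ t : F, gtw.eval t = t ^ (k - 1) + η * t ^ k := by
      intro t
      rw [hgtw]
      simp
    have hmid : ∀ t : ℕ, t ≤ k - 2 → c (t + (k - 1)) + η * c (t + k) = 0 := by
      intro t ht
      have ht' : ¬(k - 1 = t) := by omega
      have h := hpair (X ^ t) gtw
        (by rw [Polynomial.natDegree_X_pow]; omega)
        (by rw [Polynomial.coeff_X_pow, Polynomial.coeff_X_pow, if_neg (by omega : ¬(k = t)),
              if_neg ht', mul_zero])
        hgdeg hgck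
      simp only [Polynomial.eval_pow, Polynomial.eval_X, Polynomial.coeff_X_pow, if_neg ht',
        zero_mul, add_zero] at h
      calc c (t + (k - 1)) + η * c (t + k)
          = ∑ j, (v j * α j ^ t) * (v j * gtw.eval (α j)) := by
            simp only [hc, Finset.mul_sum, ← Finset.sum_add_distrib]
            refine Finset.sum_congr rfl fun j _ => ?_
            rw [hgeval, pow_add, pow_add]
            ring
        _ = 0 := h
    have h2km3 : c (2 * k - 3) = 0 := by
      have h := hmid (k - 3) (by omega)
      have e1 : (k - 3) + (k - 1) = 2 * k - 4 := by omega
      have e2 : (k - 3) + k = 2 * k - 3 := by omega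
      rw [e1, e2, hlow _ le_rfl, zero_add] at h
      exact (mul_eq_zero.mp h).resolve_left hη
    have h2km2 : c (2 * k - 2) = 0 := by
      have h := hmid (k - 2) le_rfl
      have e1 : (k - 2) + (k - 1) = 2 * k - 3 := by omega
      have e2 : (k - 2) + k = 2 * k - 2 := by omega
      rw [e1, e2, h2km3, zero_add] at h
      exact (mul_eq_zero.mp h).resolve_left hη
    have hall : ∀ m, m ≤ 2 * k - 2 → c m = 0 := by
      intro m hm
      by_cases h3 : m = 2 * k - 3
      · rw [h3]; exact h2km3
      · by_cases h4 : m = 2 * k - 2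
        · rw [h4]; exact h2km2
        · exact hlow m (by omega)
    have hprop := Stmt15Aux.prop_const (n := 2 * k) (by omega) α hα (fun j => v j ^ 2)
      (fun m hm => by simpa [hc] using hall m (by omega))
    set lam : F := -(v ⟨0, by omega⟩ ^ 2 * ∏ i ∈ Finset.univ.erase (⟨0, by omega⟩ : Fin (2 * k)),
      (α ⟨0, by omega⟩ - α i)) with hlam
    have hlam0 : lam ≠ 0 := by
      rw [hlam, neg_ne_zero]
      exact mul_ne_zero (pow_ne_zero _ (hv _)) (hW0 _)
    have hvW : ∀ j, v j ^ 2 * ∏ i ∈ Finset.univ.erase j, (α j - α i) = -lam := by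
      intro j
      rw [hlam, neg_neg]
      exact hprop j _
    have hvW' : ∀ j, v j ^ 2 = -lam * (∏ i ∈ Finset.univ.erase j, (α j - α i))⁻¹ := by
      intro j
      have h := hvW j
      field_simp [hW0 j]
      linear_combination h
    have hvu : ∀ j, lam * u j = v j ^ 2 := by
      intro j
      rw [hu j, hWinv j, hvW' j]
      ring
    have hkey : ∀ m : ℕ, m ≤ 2 * k →
        ∑ j, α j ^ m * (∏ i ∈ Finset.univ.erase j, (α j - α i))⁻¹ =
        ((X : Polynomial F) ^ m).coeff (2 * k - 1) +
          ((X : Polynomial F) ^ m).coeff (2 * k) * ∑ i, α i := by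
      intro m hm
      have h := Stmt15Aux.key_sum (by omega) α hα
        (h := (X : Polynomial F) ^ m) (by rw [Polynomial.natDegree_X_pow]; exact hm)
      simp only [Polynomial.eval_pow, Polynomial.eval_X] at h
      rw [← h]
      exact Finset.sum_congr rfl fun j _ => by rw [hWinv j]
    have hcm : ∀ m : ℕ, m ≤ 2 * k → c m =
        -lam * (((X : Polynomial F) ^ m).coeff (2 * k - 1) +
          ((X : Polynomial F) ^ m).coeff (2 * k) * ∑ i, α i) := by
      intro m hm
      rw [← hkey m hm, Finset.mul_sum]
      simp only [hc]
      exact Finset.sum_congr rfl fun j _ => by rw [hvW' j]; ring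
    have hA : c (2 * k - 1) = -lam := by
      rw [hcm _ (by omega), Polynomial.coeff_X_pow, Polynomial.coeff_X_pow, if_pos rfl,
        if_neg (by omega)]
      ring
    have hB : c (2 * k) = -lam * ∑ i, α i := by
      rw [hcm _ le_rfl, Polynomial.coeff_X_pow, Polynomial.coeff_X_pow, if_neg (by omega),
        if_pos rfl]
      ring
    have hfin := hpair gtw gtw hgdeg hgck hgdeg hgck
    rw [hgc1, mul_one] at hfin
    have hsum : ∑ j, (v j * gtw.eval (α j)) * (v j * gtw.eval (α j))
        = c (2 * k - 2) + 2 * η * c (2 * k - 1) + η * η * c (2 * k) := by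
      simp only [hc, Finset.mul_sum, ← Finset.sum_add_distrib]
      refine Finset.sum_congr rfl fun j _ => ?_
      have p1 : α j ^ (2 * k - 2) = α j ^ (k - 1) * α j ^ (k - 1) := by
        rw [← pow_add]; congr 1; omega
      have p2 : α j ^ (2 * k - 1) = α j ^ (k - 1) * α j ^ k := by
        rw [← pow_add]; congr 1; omega
      have p3 : α j ^ (2 * k) = α j ^ k * α j ^ k := by
        rw [← pow_add]; congr 1; omega
      rw [hgeval, p1, p2, p3]
      ring
    rw [hsum, h2km2, hA, hB] at hfin
    refine ⟨lam, hlam0, ?_, hvu⟩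
    linear_combination -hfin
  · rintro ⟨lam, hlam0, hlam1, hlam2⟩
    refine ⟨?_, ⟨k, by omega⟩, ?_⟩
    · intro c1 hc1
      obtain ⟨f, hf1, hf2, rfl⟩ := hc1
      intro c2 hc2
      obtain ⟨g, hg1, hg2, rfl⟩ := hc2
      rw [Stmt15Aux.snoc_pair_sum]
      have hfg : (f * g).natDegree ≤ 2 * k :=
        le_trans Polynomial.natDegree_mul_le (by omega)
      have hksum := Stmt15Aux.key_sum (n := 2 * k) (by omega) α hα hfg
      have hc2k : (f * g).coeff (2 * k) = η * f.coeff (k - 1) * (η * g.coeff (k - 1)) := by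
        rw [Stmt15Aux.coeff_mul_high hf1 hg1, hf2, hg2]
      have hc2k1 : (f * g).coeff (2 * k - 1) =
          f.coeff (k - 1) * (η * g.coeff (k - 1)) + η * f.coeff (k - 1) * g.coeff (k - 1) := by
        rw [Stmt15Aux.coeff_mul_next (by omega) hf1 hg1, hf2, hg2]
      have hterm : ∀ j, (v j * f.eval (α j)) * (v j * g.eval (α j)) =
          -lam * ((f * g).eval (α j) * ∏ i ∈ Finset.univ.erase j, (α j - α i)⁻¹) := by
        intro j
        have h := hlam2 j
        rw [hu j] at h
        rw [Polynomial.eval_mul]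
        calc (v j * f.eval (α j)) * (v j * g.eval (α j))
            = v j ^ 2 * (f.eval (α j) * g.eval (α j)) := by ring
          _ = (lam * -∏ i ∈ Finset.univ.erase j, (α j - α i)⁻¹) *
              (f.eval (α j) * g.eval (α j)) := by rw [h]
          _ = -lam * ((f.eval (α j) * g.eval (α j)) *
              ∏ i ∈ Finset.univ.erase j, (α j - α i)⁻¹) := by ring
      have hS : ∑ j, (v j * f.eval (α j)) * (v j * g.eval (α j)) =
          -lam * ((f * g).coeff (2 * k - 1) + (f * g).coeff (2 * k) * ∑ i, α i) := by
        rw [← hksum, Finset.mul_sum]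
        exact Finset.sum_congr rfl fun j _ => hterm j
      rw [hS, hc2k1, hc2k]
      linear_combination (-(f.coeff (k - 1) * g.coeff (k - 1))) * hlam1
    · rw [Stmt15Aux.codeDim_ETGRS hk0 α v hα hv η]
      omega
end

section
/- Let q be a power of 2, let 3 ≤ k ≤ (q−2)/2, let η ∈ F_q^*, let α = (α_1,…,α_{2k}) ∈ F_q^{2k} have pairwise distinct entries, and define v = (v_1,…,v_{2k}) by v_j = ∏_{1≤i≤2k, i≠j} (α_j − α_i)^{−q/2}. Then: (1) if S_α = α_1 + … + α_{2k} = 0, the (+)-TGRS code C_{k,2k}(α,v,η) is self-dual; (2) if S_α = η^{−2}, the (+)-ETGRS code C_{k,2k}(α,v,η,∞) is almost self-dual. -/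
set_option maxHeartbeats 1000000


open Polynomial

noncomputable section

variable {F : Type*} [Field F]

open Finset in
section
lemma lagBasis_coeff {n : ℕ} (α : Fin n → F) (hα : Function.Injective α) (i : Fin n) :
    (Lagrange.basis Finset.univ α i).coeff (n - 1) =
      (∏ j ∈ Finset.univ.erase i, (α i - α j))⁻¹ := by
  have h1 : Lagrange.basis Finset.univ α i =
      C (∏ j ∈ Finset.univ.erase i, (α i - α j)⁻¹) *
        ∏ j ∈ Finset.univ.erase i, (X - C (α j)) := by
    rw [Lagrange.basis]
    simp_rw [Lagrange.basisDivisor]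
    rw [Finset.prod_mul_distrib, map_prod]
  have hmonic : (∏ j ∈ Finset.univ.erase i, (X - C (α j))).Monic :=
    monic_prod_of_monic _ _ (fun j _ => monic_X_sub_C _)
  have hdeg : (∏ j ∈ Finset.univ.erase i, (X - C (α j))).natDegree = n - 1 := by
    rw [natDegree_prod _ _ (fun j _ => X_sub_C_ne_zero _)]
    simp [Finset.card_erase_of_mem]
  rw [h1, coeff_C_mul, ← hdeg, hmonic.coeff_natDegree, mul_one, Finset.prod_inv_distrib]

lemma sum_u_eval {n : ℕ} (α : Fin n → F) (hα : Function.Injective α)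
    {p : F[X]} (hp : p.degree < n) :
    ∑ j, (∏ i ∈ Finset.univ.erase j, (α j - α i))⁻¹ * p.eval (α j) = p.coeff (n - 1) := by
  have hinj : Set.InjOn α (Finset.univ : Finset (Fin n)) := hα.injOn
  have hdeg : p.degree < (Finset.univ : Finset (Fin n)).card := by simpa using hp
  conv_rhs => rw [Lagrange.eq_interpolate hinj hdeg]
  rw [Lagrange.interpolate_apply, finset_sum_coeff]
  refine Finset.sum_congr rfl fun j _ => ?_
  rw [coeff_C_mul, lagBasis_coeff α hα j, mul_comm]

lemma sum_u_pow {n : ℕ} (hn : 0 < n) (α : Fin n → F) (hα : Function.Injective α) :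
    ∑ j, (∏ i ∈ Finset.univ.erase j, (α j - α i))⁻¹ * (α j) ^ n = ∑ j, α j := by
  have : Nonempty (Fin n) := ⟨⟨0, hn⟩⟩
  obtain ⟨Q, hQ⟩ : ∃ Q : F[X], Q = ∏ j : Fin n, (X - C (α j)) := ⟨_, rfl⟩
  obtain ⟨P, hP⟩ : ∃ P : F[X], P = X ^ n - Q := ⟨_, rfl⟩
  have hprodmonic : Q.Monic := hQ ▸ monic_prod_of_monic _ _ (fun j _ => monic_X_sub_C _)
  have hproddeg : Q.natDegree = n := by
    rw [hQ, natDegree_prod _ _ (fun j _ => X_sub_C_ne_zero _)]; simp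
  have hdegP : P.degree < n := by
    have := degree_sub_lt (p := X ^ n) (q := Q)
      (by rw [degree_X_pow, Polynomial.degree_eq_natDegree hprodmonic.ne_zero, hproddeg])
      (pow_ne_zero n X_ne_zero)
      (by simp [leadingCoeff_X_pow, hprodmonic.leadingCoeff])
    rw [degree_X_pow] at this
    rw [hP]; exact this
  have heval : ∀ j, P.eval (α j) = (α j) ^ n := by
    intro j
    have hQ0 : Q.eval (α j) = 0 := by
      rw [hQ, eval_prod]
      exact Finset.prod_eq_zero (Finset.mem_univ j) (by simp)
    rw [hP]; simp [hQ0]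
  have hcoeff : P.coeff (n - 1) = ∑ j, α j := by
    have h1 : Q.nextCoeff = -∑ j, α j := by
      rw [hQ]; exact prod_X_sub_C_nextCoeff α
    rw [nextCoeff_of_natDegree_pos (by rw [hproddeg]; exact hn), hproddeg] at h1
    rw [hP, coeff_sub, coeff_X_pow, if_neg (by omega), h1]
    ring
  calc ∑ j, (∏ i ∈ Finset.univ.erase j, (α j - α i))⁻¹ * (α j) ^ n
      = ∑ j, (∏ i ∈ Finset.univ.erase j, (α j - α i))⁻¹ * P.eval (α j) := by
        refine Finset.sum_congr rfl fun j _ => by rw [heval]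
    _ = P.coeff (n - 1) := sum_u_eval α hα hdegP
    _ = ∑ j, α j := hcoeff

/-- Key residue identity: for `h` of degree ≤ n, the weighted sum of values is
`h_{n-1} + h_n * Σ α`. -/
lemma sum_u_eval_top {n : ℕ} (hn : 0 < n) (α : Fin n → F) (hα : Function.Injective α)
    {h : F[X]} (hh : h.natDegree ≤ n) :
    ∑ j, (∏ i ∈ Finset.univ.erase j, (α j - α i))⁻¹ * h.eval (α j) =
      h.coeff (n - 1) + h.coeff n * ∑ j, α j := by
  obtain ⟨p, hp⟩ : ∃ p : F[X], p = h - C (h.coeff n) * X ^ n := ⟨_, rfl⟩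
  have hpd : p.degree < n := by
    rw [degree_lt_iff_coeff_zero]
    intro m hm
    rw [hp, coeff_sub, coeff_C_mul, coeff_X_pow]
    rcases eq_or_lt_of_le hm with h1 | h1
    · rw [← h1, if_pos rfl, mul_one, sub_self]
    · rw [if_neg (by omega), mul_zero, coeff_eq_zero_of_natDegree_lt (by omega), sub_zero]
  have hco : p.coeff (n - 1) = h.coeff (n - 1) := by
    rw [hp, coeff_sub, coeff_C_mul, coeff_X_pow, if_neg (by omega), mul_zero, sub_zero]
  have heval : ∀ j, h.eval (α j) = p.eval (α j) + h.coeff n * (α j) ^ n := by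
    intro j; rw [hp]; simp
  calc ∑ j, (∏ i ∈ Finset.univ.erase j, (α j - α i))⁻¹ * h.eval (α j)
      = (∑ j, (∏ i ∈ Finset.univ.erase j, (α j - α i))⁻¹ * p.eval (α j))
        + h.coeff n * ∑ j, (∏ i ∈ Finset.univ.erase j, (α j - α i))⁻¹ * (α j) ^ n := by
        rw [Finset.mul_sum, ← Finset.sum_add_distrib]
        refine Finset.sum_congr rfl fun j _ => ?_
        rw [heval j]; ring
    _ = h.coeff (n - 1) + h.coeff n * ∑ j, α j := by
        rw [sum_u_eval α hα hpd, sum_u_pow hn α hα, hco]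

lemma coeff_mul_2k {k : ℕ} (hk : 1 ≤ k) {p q : F[X]}
    (hp : p.natDegree ≤ k) (hq : q.natDegree ≤ k) :
    (p * q).coeff (2 * k) = p.coeff k * q.coeff k ∧
    (p * q).coeff (2 * k - 1) = p.coeff k * q.coeff (k - 1) + p.coeff (k - 1) * q.coeff k := by
  obtain ⟨p', hp'⟩ : ∃ p' : F[X], p' = p - C (p.coeff k) * X ^ k := ⟨_, rfl⟩
  obtain ⟨q', hq'⟩ : ∃ q' : F[X], q' = q - C (q.coeff k) * X ^ k := ⟨_, rfl⟩
  have hdeg : ∀ r : F[X], r.natDegree ≤ k →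
      ∀ m, k ≤ m → (r - C (r.coeff k) * X ^ k).coeff m = 0 := by
    intro r hr m hm
    rw [coeff_sub, coeff_C_mul, coeff_X_pow]
    rcases eq_or_lt_of_le hm with h1 | h1
    · rw [← h1, if_pos rfl, mul_one, sub_self]
    · rw [if_neg (by omega), mul_zero, coeff_eq_zero_of_natDegree_lt (by omega), sub_zero]
  have hp'd : p'.degree < k := by
    rw [degree_lt_iff_coeff_zero]; intro m hm
    exact hp' ▸ hdeg p hp m (by exact_mod_cast hm)
  have hq'd : q'.degree < k := by
    rw [degree_lt_iff_coeff_zero]; intro m hm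
    exact hq' ▸ hdeg q hq m (by exact_mod_cast hm)
  have hp'co : ∀ m, m < k → p'.coeff m = p.coeff m := by
    intro m hm
    rw [hp', coeff_sub, coeff_C_mul, coeff_X_pow, if_neg (by omega), mul_zero, sub_zero]
  have hq'co : ∀ m, m < k → q'.coeff m = q.coeff m := by
    intro m hm
    rw [hq', coeff_sub, coeff_C_mul, coeff_X_pow, if_neg (by omega), mul_zero, sub_zero]
  have hsplit : p * q = p' * q' + (C (q.coeff k) * (p' * X ^ k) + C (p.coeff k) * (q' * X ^ k))
      + C (p.coeff k * q.coeff k) * X ^ (2 * k) := by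
    rw [hp', hq', C_mul, two_mul, pow_add]
    ring
  have hnd : ∀ r : F[X], r.degree < (k : WithBot ℕ) → r.natDegree ≤ k - 1 := by
    intro r hr
    rcases eq_or_ne r 0 with rfl | h
    · simp
    · have := (natDegree_lt_iff_degree_lt h).2 (by exact_mod_cast hr)
      omega
  have hp'q' : ∀ m, 2 * k - 1 ≤ m → (p' * q').coeff m = 0 := by
    intro m hm
    apply coeff_eq_zero_of_natDegree_lt
    have h1 := natDegree_mul_le (p := p') (q := q')
    have h2 := hnd p' hp'd
    have h3 := hnd q' hq'd
    omega
  have hp'k : p'.coeff k = 0 := by rw [hp']; exact hdeg p hp k le_rfl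
  have hq'k : q'.coeff k = 0 := by rw [hq']; exact hdeg q hq k le_rfl
  constructor
  · rw [hsplit]
    rw [coeff_add, coeff_add, coeff_add, coeff_C_mul, coeff_C_mul, coeff_C_mul,
        coeff_mul_X_pow', coeff_mul_X_pow', coeff_X_pow, hp'q' _ (by omega)]
    rw [if_pos (by omega), if_pos (by omega), if_pos rfl]
    have e1 : 2 * k - k = k := by omega
    rw [e1, hp'k, hq'k]
    ring
  · rw [hsplit]
    rw [coeff_add, coeff_add, coeff_add, coeff_C_mul, coeff_C_mul, coeff_C_mul,
        coeff_mul_X_pow', coeff_mul_X_pow', coeff_X_pow, hp'q' _ le_rfl]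
    rw [if_pos (by omega), if_pos (by omega), if_neg (by omega)]
    have e1 : 2 * k - 1 - k = k - 1 := by omega
    rw [e1, hp'co _ (by omega), hq'co _ (by omega)]
    ring

/-- The twisted polynomial attached to a coefficient vector. -/
def Ppoly {k : ℕ} (hk : 0 < k) (η : F) (a : Fin k → F) : F[X] :=
  (∑ i : Fin k, C (a i) * X ^ (i : ℕ)) + C (η * a ⟨k - 1, Nat.sub_lt hk one_pos⟩) * X ^ k

lemma Ppoly_coeff_lt {k : ℕ} (hk : 0 < k) (η : F) (a : Fin k → F) {m : ℕ} (hm : m < k) :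
    (Ppoly hk η a).coeff m = a ⟨m, hm⟩ := by
  rw [Ppoly, coeff_add, finset_sum_coeff]
  rw [coeff_C_mul, coeff_X_pow, if_neg (by omega), mul_zero, add_zero]
  rw [Finset.sum_eq_single ⟨m, hm⟩ (fun i _ hi => by
    rw [coeff_C_mul, coeff_X_pow, if_neg (fun h => hi (by ext; exact h.symm)), mul_zero])
    (fun h => absurd (Finset.mem_univ _) h)]
  rw [coeff_C_mul, coeff_X_pow, if_pos rfl, mul_one]

lemma Ppoly_coeff_k {k : ℕ} (hk : 0 < k) (η : F) (a : Fin k → F) :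
    (Ppoly hk η a).coeff k = η * a ⟨k - 1, Nat.sub_lt hk one_pos⟩ := by
  rw [Ppoly, coeff_add, finset_sum_coeff]
  rw [coeff_C_mul, coeff_X_pow, if_pos rfl, mul_one]
  rw [Finset.sum_eq_zero (fun i _ => by
    rw [coeff_C_mul, coeff_X_pow, if_neg (by omega), mul_zero]), zero_add]

lemma Ppoly_coeff_gt {k : ℕ} (hk : 0 < k) (η : F) (a : Fin k → F) {m : ℕ} (hm : k < m) :
    (Ppoly hk η a).coeff m = 0 := by
  rw [Ppoly, coeff_add, finset_sum_coeff]
  rw [coeff_C_mul, coeff_X_pow, if_neg (by omega), mul_zero, add_zero]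
  exact Finset.sum_eq_zero (fun i _ => by
    rw [coeff_C_mul, coeff_X_pow, if_neg (by omega), mul_zero])

lemma Ppoly_natDegree {k : ℕ} (hk : 0 < k) (η : F) (a : Fin k → F) :
    (Ppoly hk η a).natDegree ≤ k :=
  natDegree_le_iff_coeff_eq_zero.2 (fun _ hm => Ppoly_coeff_gt hk η a hm)

lemma Ppoly_add {k : ℕ} (hk : 0 < k) (η : F) (a b : Fin k → F) :
    Ppoly hk η (a + b) = Ppoly hk η a + Ppoly hk η b := by
  simp only [Ppoly, Pi.add_apply, mul_add, map_add, add_mul, Finset.sum_add_distrib]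
  ring

lemma Ppoly_smul {k : ℕ} (hk : 0 < k) (η : F) (c : F) (a : Fin k → F) :
    Ppoly hk η (c • a) = C c * Ppoly hk η a := by
  simp only [Ppoly, Pi.smul_apply, smul_eq_mul, mul_add, Finset.mul_sum, map_mul]
  congr 1
  · exact Finset.sum_congr rfl fun i _ => by ring
  · ring

lemma Ppoly_eq {k : ℕ} (hk : 0 < k) (η : F) {f : F[X]} (hd : f.natDegree ≤ k)
    (hc : f.coeff k = η * f.coeff (k - 1)) :
    Ppoly hk η (fun i => f.coeff i) = f := by
  ext m
  rcases lt_trichotomy m k with h | rfl | h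
  · rw [Ppoly_coeff_lt hk η _ h]
  · rw [Ppoly_coeff_k, hc]
  · rw [Ppoly_coeff_gt hk η _ h, coeff_eq_zero_of_natDegree_lt (by omega)]

/-- The TGRS evaluation map as a linear map. -/
def PhiMap {k n : ℕ} (hk : 0 < k) (η : F) (α v : Fin n → F) :
    (Fin k → F) →ₗ[F] (Fin n → F) where
  toFun a := fun j => v j * (Ppoly hk η a).eval (α j)
  map_add' a b := by funext j; simp only [Ppoly_add, eval_add, Pi.add_apply]; ring
  map_smul' c a := by
    funext j
    simp only [Ppoly_smul, eval_mul, eval_C, RingHom.id_apply, Pi.smul_apply, smul_eq_mul]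
    ring

lemma TGRS_eq_range {k n : ℕ} (hk : 0 < k) (η : F) (α v : Fin n → F) :
    TGRS k n α v η = ↑(LinearMap.range (PhiMap hk η α v)) := by
  ext c
  constructor
  · rintro ⟨f, hd, hc, rfl⟩
    exact ⟨fun i => f.coeff i, by
      funext j; simp only [PhiMap, LinearMap.coe_mk, AddHom.coe_mk, Ppoly_eq hk η hd hc]⟩
  · rintro ⟨a, rfl⟩
    exact ⟨Ppoly hk η a, Ppoly_natDegree hk η a, by
      rw [Ppoly_coeff_k, Ppoly_coeff_lt hk η a (Nat.sub_lt hk one_pos)], rfl⟩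

/-- The ETGRS evaluation map as a linear map. -/
def PsiMap {k n : ℕ} (hk : 0 < k) (η : F) (α v : Fin n → F) :
    (Fin k → F) →ₗ[F] (Fin (n + 1) → F) where
  toFun a := Fin.snoc (PhiMap hk η α v a) (a ⟨k - 1, Nat.sub_lt hk one_pos⟩)
  map_add' a b := by
    funext j
    refine Fin.lastCases ?_ (fun i => ?_) j <;>
      simp [Fin.snoc_last, Fin.snoc_castSucc, map_add]
  map_smul' c a := by
    funext j
    refine Fin.lastCases ?_ (fun i => ?_) j <;>
      simp [Fin.snoc_last, Fin.snoc_castSucc, map_smul]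

lemma ETGRS_eq_range {k n : ℕ} (hk : 0 < k) (η : F) (α v : Fin n → F) :
    ETGRS k n α v η = ↑(LinearMap.range (PsiMap hk η α v)) := by
  ext c
  constructor
  · rintro ⟨f, hd, hc, rfl⟩
    refine ⟨fun i => f.coeff i, ?_⟩
    simp only [PsiMap, PhiMap, LinearMap.coe_mk, AddHom.coe_mk, Ppoly_eq hk η hd hc]
  · rintro ⟨a, rfl⟩
    refine ⟨Ppoly hk η a, Ppoly_natDegree hk η a, by
      rw [Ppoly_coeff_k, Ppoly_coeff_lt hk η a (Nat.sub_lt hk one_pos)], ?_⟩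
    simp only [PsiMap, PhiMap, LinearMap.coe_mk, AddHom.coe_mk,
      Ppoly_coeff_lt hk η a (Nat.sub_lt hk one_pos)]

lemma PhiMap_injective {k n : ℕ} (hk : 0 < k) (hkn : k < n) (η : F) (α v : Fin n → F)
    (hα : Function.Injective α) (hv : ∀ j, v j ≠ 0) :
    Function.Injective (PhiMap hk η α v) := by
  have key : ∀ a, PhiMap hk η α v a = 0 → a = 0 := by
    intro a ha
    have hz : ∀ j, (Ppoly hk η a).eval (α j) = 0 := by
      intro j
      have := congrFun ha j
      simp only [PhiMap, LinearMap.coe_mk, AddHom.coe_mk, Pi.zero_apply] at this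
      exact (mul_eq_zero.1 this).resolve_left (hv j)
    have hP : Ppoly hk η a = 0 :=
      eq_zero_of_natDegree_lt_card_of_eval_eq_zero _ hα hz
        (by simpa using lt_of_le_of_lt (Ppoly_natDegree hk η a) hkn)
    funext i
    have := Ppoly_coeff_lt hk η a i.isLt
    rw [hP, coeff_zero] at this
    simpa using this.symm
  intro a b hab
  have := key (a - b) (by rw [map_sub, hab, sub_self])
  exact sub_eq_zero.1 this

lemma PsiMap_injective {k n : ℕ} (hk : 0 < k) (hkn : k < n) (η : F) (α v : Fin n → F)
    (hα : Function.Injective α) (hv : ∀ j, v j ≠ 0) :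
    Function.Injective (PsiMap hk η α v) := by
  intro a b hab
  apply PhiMap_injective hk hkn η α v hα hv
  funext j
  have := congrFun hab j.castSucc
  simpa only [PsiMap, LinearMap.coe_mk, AddHom.coe_mk, Fin.snoc_castSucc] using this

lemma finrank_range_PhiMap {k n : ℕ} (hk : 0 < k) (hkn : k < n) (η : F) (α v : Fin n → F)
    (hα : Function.Injective α) (hv : ∀ j, v j ≠ 0) :
    Module.finrank F (LinearMap.range (PhiMap hk η α v)) = k := by
  rw [LinearMap.finrank_range_of_inj (PhiMap_injective hk hkn η α v hα hv)]
  simp [Module.finrank_pi]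

lemma finrank_range_PsiMap {k n : ℕ} (hk : 0 < k) (hkn : k < n) (η : F) (α v : Fin n → F)
    (hα : Function.Injective α) (hv : ∀ j, v j ≠ 0) :
    Module.finrank F (LinearMap.range (PsiMap hk η α v)) = k := by
  rw [LinearMap.finrank_range_of_inj (PsiMap_injective hk hkn η α v hα hv)]
  simp [Module.finrank_pi]

/-- The standard bilinear form on `Fin N → F`. -/
def stdBilin (N : ℕ) : LinearMap.BilinForm F (Fin N → F) :=
  LinearMap.mk₂ F (fun x y => ∑ i, x i * y i)
    (fun x x' y => by simp [add_mul, Finset.sum_add_distrib])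
    (fun c x y => by simp [Finset.mul_sum, mul_assoc])
    (fun x y y' => by simp [mul_add, Finset.sum_add_distrib])
    (fun c x y => by
      simp only [Pi.smul_apply, smul_eq_mul, Finset.mul_sum]
      exact Finset.sum_congr rfl fun i _ => by ring)

lemma stdBilin_apply {N : ℕ} (x y : Fin N → F) : stdBilin N x y = ∑ i, x i * y i := rfl

lemma stdBilin_isRefl {N : ℕ} : (stdBilin (F := F) N).IsRefl := by
  intro x y h
  rw [stdBilin_apply] at h ⊢
  rw [← h]
  exact Finset.sum_congr rfl fun i _ => mul_comm _ _

lemma stdBilin_nondegenerate {N : ℕ} : (stdBilin (F := F) N).Nondegenerate := by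
  refine (LinearMap.IsRefl.nondegenerate_iff_separatingLeft (B := stdBilin (F := F) N) (by exact stdBilin_isRefl)).2 ?_
  intro x hx
  funext i
  have := hx (Pi.single i 1)
  rw [stdBilin_apply] at this
  simpa [Pi.single_apply, mul_ite, Finset.sum_ite_eq'] using this

lemma dualCode_coe {N : ℕ} (W : Submodule F (Fin N → F)) :
    dualCode (↑W : Set (Fin N → F)) = ↑((stdBilin N).orthogonal W) := by
  ext x
  constructor
  · intro hx c hc
    rw [stdBilin_apply]
    rw [← hx c hc]
    exact Finset.sum_congr rfl fun i _ => mul_comm _ _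
  · intro hx c hc
    have := hx c hc
    rw [stdBilin_apply] at this
    rw [← this]
    exact Finset.sum_congr rfl fun i _ => mul_comm _ _

lemma selfdual_of {N : ℕ} (W : Submodule F (Fin N → F))
    (h : ∀ x ∈ W, ∀ y ∈ W, ∑ i, x i * y i = 0)
    (hr : 2 * Module.finrank F W = N) :
    (↑W : Set (Fin N → F)) = dualCode (↑W : Set (Fin N → F)) := by
  rw [dualCode_coe]
  refine congrArg _ (Submodule.eq_of_le_of_finrank_eq ?_ ?_)
  · intro x hx y hy
    rw [stdBilin_apply]
    exact h y hy x hx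
  · rw [LinearMap.BilinForm.finrank_orthogonal stdBilin_nondegenerate]
    have : Module.finrank F (Fin N → F) = N := by simp [Module.finrank_pi]
    omega

lemma char_two_facts {F : Type*} [Field F] [Fintype F] (hq : ∃ e : ℕ, Fintype.card F = 2 ^ e)
    (h8 : 8 ≤ Fintype.card F) :
    (2 : F) = 0 ∧ ∀ x : F, x ^ (Fintype.card F / 2) * x ^ (Fintype.card F / 2) = x := by
  obtain ⟨e, he⟩ := hq
  have hp : Nat.Prime (ringChar F) := CharP.char_is_prime F (ringChar F)
  obtain ⟨n, hn⟩ := FiniteField.card F (ringChar F)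
  have hpn : (ringChar F) ^ (n : ℕ) = 2 ^ e := by rw [← hn.2, he]
  have hdvd : ringChar F ∣ 2 ^ e := by
    rw [← hpn]
    exact dvd_pow_self _ (by positivity)
  have hchar2 : ringChar F = 2 :=
    (Nat.prime_dvd_prime_iff_eq hp Nat.prime_two).1 (hp.dvd_of_dvd_pow hdvd)
  have h2 : (2 : F) = 0 := by
    have := (ringChar.spec F 2).2 (by rw [hchar2])
    exact_mod_cast this
  refine ⟨h2, fun x => ?_⟩
  have he1 : 1 ≤ e := by
    by_contra h
    interval_cases e <;> omega
  have hq2 : Fintype.card F / 2 * 2 = Fintype.card F := by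
    obtain ⟨e', rfl⟩ : ∃ e', e = e' + 1 := ⟨e - 1, by omega⟩
    rw [he, pow_succ]
    omega
  calc x ^ (Fintype.card F / 2) * x ^ (Fintype.card F / 2)
      = x ^ (Fintype.card F / 2 + Fintype.card F / 2) := (pow_add x _ _).symm
    _ = x ^ Fintype.card F := by congr 1; omega
    _ = x := FiniteField.pow_card x

lemma inner_TGRS {k : ℕ} (hk : 0 < k) (h2 : (2 : F) = 0) (η : F)
    (α v : Fin (2 * k) → F) (hα : Function.Injective α)
    (hv2 : ∀ j, v j * v j = (∏ i ∈ Finset.univ.erase j, (α j - α i))⁻¹)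
    (a b : Fin k → F) :
    ∑ j, (PhiMap hk η α v a) j * (PhiMap hk η α v b) j
      = η * a ⟨k - 1, Nat.sub_lt hk one_pos⟩ * (η * b ⟨k - 1, Nat.sub_lt hk one_pos⟩)
          * ∑ j, α j := by
  have hfd := Ppoly_natDegree hk η a
  have hgd := Ppoly_natDegree hk η b
  have hmul : (Ppoly hk η a * Ppoly hk η b).natDegree ≤ 2 * k :=
    le_trans (natDegree_mul_le) (by omega)
  obtain ⟨hc2k, hc2k1⟩ := coeff_mul_2k hk hfd hgd
  have step1 : ∑ j, (PhiMap hk η α v a) j * (PhiMap hk η α v b) j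
      = ∑ j, (∏ i ∈ Finset.univ.erase j, (α j - α i))⁻¹
          * (Ppoly hk η a * Ppoly hk η b).eval (α j) := by
    refine Finset.sum_congr rfl fun j _ => ?_
    simp only [PhiMap, LinearMap.coe_mk, AddHom.coe_mk, eval_mul]
    rw [← hv2 j]
    ring
  rw [step1, sum_u_eval_top (by omega) α hα hmul, hc2k, hc2k1]
  rw [Ppoly_coeff_k, Ppoly_coeff_k, Ppoly_coeff_lt hk η a (Nat.sub_lt hk one_pos),
    Ppoly_coeff_lt hk η b (Nat.sub_lt hk one_pos)]
  have hz : η * a ⟨k - 1, Nat.sub_lt hk one_pos⟩ * b ⟨k - 1, Nat.sub_lt hk one_pos⟩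
      + a ⟨k - 1, Nat.sub_lt hk one_pos⟩ * (η * b ⟨k - 1, Nat.sub_lt hk one_pos⟩)
      = (2 : F) * (η * a ⟨k - 1, Nat.sub_lt hk one_pos⟩ * b ⟨k - 1, Nat.sub_lt hk one_pos⟩) := by
    ring
  rw [hz, h2, zero_mul, zero_add]

end
end

/-- constructions of self-dual (+)-TGRS and almost self-dual (+)-ETGRS
codes in characteristic 2. -/
theorem stmt16 {F : Type*} [Field F] [Fintype F] [DecidableEq F] {k : ℕ}
    (hq : ∃ e : ℕ, Fintype.card F = 2 ^ e)
    (hk : 3 ≤ k) (hk2 : 2 * k + 2 ≤ Fintype.card F)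
    (η : F) (hη : η ≠ 0)
    (α : Fin (2 * k) → F) (hα : Function.Injective α)
    (v : Fin (2 * k) → F)
    (hv : ∀ j, v j =
      ∏ i ∈ Finset.univ.erase j, ((α j - α i) ^ (Fintype.card F / 2))⁻¹) :
    ((∑ i, α i) = 0 → TGRS k (2 * k) α v η = dualCode (TGRS k (2 * k) α v η)) ∧
    ((∑ i, α i) = (η ^ 2)⁻¹ → almostSelfDual (ETGRS k (2 * k) α v η)) := by
  have h8 : 8 ≤ Fintype.card F := by omega
  obtain ⟨h2, hsq⟩ := char_two_facts hq h8
  have hk0 : 0 < k := by omega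
  have hkn : k < 2 * k := by omega
  have hvne : ∀ j, v j ≠ 0 := by
    intro j
    rw [hv j]
    refine Finset.prod_ne_zero_iff.2 fun i hi => ?_
    exact inv_ne_zero (pow_ne_zero _ (sub_ne_zero.2
      (fun h => (Finset.ne_of_mem_erase hi) (hα h).symm)))
  have hv2 : ∀ j, v j * v j = (∏ i ∈ Finset.univ.erase j, (α j - α i))⁻¹ := by
    intro j
    rw [hv j, ← Finset.prod_mul_distrib, ← Finset.prod_inv_distrib]
    refine Finset.prod_congr rfl fun i _ => ?_
    rw [← mul_inv, hsq]
  constructor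
  · intro hS
    rw [TGRS_eq_range hk0 η α v]
    apply selfdual_of
    · rintro x ⟨a, rfl⟩ y ⟨b, rfl⟩
      rw [inner_TGRS hk0 h2 η α v hα hv2 a b, hS, mul_zero]
    · rw [finrank_range_PhiMap hk0 hkn η α v hα hvne]
  · intro hS
    refine ⟨?_, ⟨k, by ring⟩, ?_⟩
    · show ETGRS k (2 * k) α v η ⊆ dualCode (ETGRS k (2 * k) α v η)
      rw [ETGRS_eq_range hk0 η α v]
      rintro c1 ⟨a, rfl⟩ c2 ⟨b, rfl⟩
      rw [Fin.sum_univ_castSucc]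
      simp only [PsiMap, LinearMap.coe_mk, AddHom.coe_mk, Fin.snoc_castSucc, Fin.snoc_last]
      rw [inner_TGRS hk0 h2 η α v hα hv2 a b, hS]
      calc η * a ⟨k - 1, Nat.sub_lt hk0 one_pos⟩ * (η * b ⟨k - 1, Nat.sub_lt hk0 one_pos⟩)
              * (η ^ 2)⁻¹
            + a ⟨k - 1, Nat.sub_lt hk0 one_pos⟩ * b ⟨k - 1, Nat.sub_lt hk0 one_pos⟩
          = (η ^ 2 * (η ^ 2)⁻¹)
              * (a ⟨k - 1, Nat.sub_lt hk0 one_pos⟩ * b ⟨k - 1, Nat.sub_lt hk0 one_pos⟩)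
            + a ⟨k - 1, Nat.sub_lt hk0 one_pos⟩ * b ⟨k - 1, Nat.sub_lt hk0 one_pos⟩ := by ring
        _ = (2 : F) * (a ⟨k - 1, Nat.sub_lt hk0 one_pos⟩ * b ⟨k - 1, Nat.sub_lt hk0 one_pos⟩) := by
            rw [mul_inv_cancel₀ (pow_ne_zero 2 hη), one_mul]; ring
        _ = 0 := by rw [h2, zero_mul]
    · show codeDim (ETGRS k (2 * k) α v η) = (2 * k + 1 - 1) / 2
      rw [ETGRS_eq_range hk0 η α v]
      unfold codeDim
      rw [Submodule.span_eq, finrank_range_PsiMap hk0 hkn η α v hα hvne]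
      omega
end

section
/- Let p be an odd prime, m a positive integer, q = p^{2m}, and regard F_{p^m} as a subfield of F_q. Let γ be a generator of the cyclic group F_{p^m}^*, let 3 ≤ k ≤ (p^m − 1)/2, let i_0 ∈ {1,…,k}, set η = 2·γ^{−i_0} ∈ F_q^*, and let α = (γ, γ², …, γ^{i_0−1}, 0, γ^{i_0+1}, …, γ^k, −γ, −γ², …, −γ^k) ∈ F_q^{2k}. Then the entries of α are pairwise distinct, there exists v = (v_1,…,v_{2k}) ∈ (F_q^*)^{2k} with v_j² = −∏_{1≤i≤2k, i≠j} (α_j − α_i)^{−1} for all j, and for every such v the (+)-TGRS code C_{k,2k}(α,v,η) is self-dual. -/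
open Polynomial

/-! ### Auxiliary lemmas -/

namespace Stmt17Aux
open Polynomial Finset

noncomputable section
variable {F : Type*} [Field F]

/-- Key sum: Lagrange leading-coefficient identity. -/
theorem keySum {n : ℕ} [NeZero n] (β : Fin n → F)
    (hβ : Function.Injective β) (r : F[X]) (hr : r.degree < n) :
    ∑ j, (∏ i ∈ univ.erase j, (β j - β i))⁻¹ * r.eval (β j) = r.coeff (n - 1) := by
  classical
  have hinj : Set.InjOn β (univ : Finset (Fin n)) := fun a _ b _ h => hβ h
  have hcard : (univ : Finset (Fin n)).card = n := Finset.card_fin n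
  have h := Lagrange.eq_interpolate (s := univ) (v := β) hinj (by rwa [hcard])
  have h2 := congrArg (fun q => q.coeff (n - 1)) h
  simp only [Lagrange.interpolate_apply, Polynomial.finset_sum_coeff, Polynomial.coeff_C_mul] at h2
  rw [h2]
  refine Finset.sum_congr rfl fun j _ => ?_
  have hdeg : (Lagrange.basis univ β j).natDegree = n - 1 := by
    rw [Lagrange.natDegree_basis hinj (mem_univ j), hcard]
  have hlc : (Lagrange.basis univ β j).coeff (n - 1) =
      ∏ i ∈ univ.erase j, (β j - β i)⁻¹ := by
    rw [← hdeg, Polynomial.coeff_natDegree, Lagrange.basis, Polynomial.leadingCoeff_prod]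
    refine Finset.prod_congr rfl fun i hi => ?_
    have hne : β j ≠ β i := fun h' =>
      (Finset.mem_erase.mp hi).1 (hβ h'.symm)
    rw [Lagrange.basisDivisor, Polynomial.leadingCoeff_mul, Polynomial.leadingCoeff_C,
      (Polynomial.monic_X_sub_C (β i)).leadingCoeff, mul_one]
  rw [hlc, Finset.prod_inv_distrib]
  ring

/-- Basis polynomials of the twisted space `V`. -/
def polB (k : ℕ) (η : F) (i : Fin k) : F[X] :=
  X ^ (i : ℕ) + if (i : ℕ) = k - 1 then C η * X ^ k else 0

/-- The linear map sending a coefficient vector to its twisted polynomial. -/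
def polV (k : ℕ) (η : F) : (Fin k → F) →ₗ[F] F[X] :=
  ∑ i : Fin k, (LinearMap.proj i).smulRight (polB k η i)

lemma polV_apply (k : ℕ) (η : F) (a : Fin k → F) :
    polV k η a = ∑ i : Fin k, C (a i) * polB k η i := by
  simp [polV, LinearMap.sum_apply, Polynomial.smul_eq_C_mul]

lemma polB_coeff {k : ℕ} (η : F) (i : Fin k) (d : ℕ) :
    (polB k η i).coeff d =
      (if d = (i : ℕ) then 1 else 0) +
        (if (i : ℕ) = k - 1 then η * (if d = k then 1 else 0) else 0) := by
  by_cases h : (i : ℕ) = k - 1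
  · rw [polB, if_pos h, if_pos h, Polynomial.coeff_add, Polynomial.coeff_X_pow,
      Polynomial.coeff_C_mul, Polynomial.coeff_X_pow]
  · rw [polB, if_neg h, if_neg h, add_zero, add_zero, Polynomial.coeff_X_pow]

lemma polV_coeff {k : ℕ} (hk : 0 < k) (η : F) (a : Fin k → F) (d : ℕ) :
    (polV k η a).coeff d =
      if h : d < k then a ⟨d, h⟩ else if d = k then η * a ⟨k - 1, by omega⟩ else 0 := by
  rw [polV_apply, Polynomial.finset_sum_coeff]
  simp only [Polynomial.coeff_C_mul, polB_coeff]
  by_cases h : d < k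
  · rw [dif_pos h,
      show (if d = k then (1:F) else 0) = 0 from if_neg (by omega)]
    simp only [mul_zero, ite_self, add_zero, mul_ite, mul_one]
    rw [Finset.sum_eq_single (⟨d, h⟩ : Fin k)]
    · simp
    · intro i _ hne
      exact if_neg fun hh => hne (Fin.ext hh.symm)
    · simp
  · rw [dif_neg h]
    have hterm : ∀ i : Fin k,
        a i * ((if d = (i : ℕ) then (1:F) else 0) +
          (if (i : ℕ) = k - 1 then η * (if d = k then 1 else 0) else 0)) =
        if (i : ℕ) = k - 1 then a i * (η * (if d = k then 1 else 0)) else 0 := by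
      intro i
      rw [if_neg (show d ≠ (i : ℕ) by have := i.isLt; omega)]
      split_ifs <;> ring
    rw [Finset.sum_congr rfl fun i _ => hterm i,
      Finset.sum_eq_single (⟨k - 1, by omega⟩ : Fin k)]
    · by_cases hdk : d = k
      · simp only [hdk, if_pos rfl]
        simp
        ring
      · simp [hdk]
    · intro i _ hne
      exact if_neg fun hh => hne (Fin.ext hh)
    · simp

lemma polV_natDegree_le {k : ℕ} (hk : 0 < k) (η : F) (a : Fin k → F) :
    (polV k η a).natDegree ≤ k := by
  refine Polynomial.natDegree_le_iff_coeff_eq_zero.mpr fun d hd => ?_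
  rw [polV_coeff hk, dif_neg (by omega), if_neg (by omega)]

lemma polV_coeff_k {k : ℕ} (hk : 0 < k) (η : F) (a : Fin k → F) :
    (polV k η a).coeff k = η * a ⟨k - 1, by omega⟩ := by
  rw [polV_coeff hk, dif_neg (by omega), if_pos rfl]

lemma polV_coeff_lt {k : ℕ} (η : F) (a : Fin k → F) (i : Fin k) :
    (polV k η a).coeff (i : ℕ) = a i := by
  rw [polV_coeff i.pos η a, dif_pos i.isLt]

/-- The encoding map of the TGRS code. -/
def evalMap (k n : ℕ) (α v : Fin n → F) (η : F) : (Fin k → F) →ₗ[F] (Fin n → F) :=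
  LinearMap.pi fun j => v j • (Polynomial.leval (α j) ∘ₗ polV k η)

lemma evalMap_apply {k n : ℕ} (α v : Fin n → F) (η : F) (a : Fin k → F) (j : Fin n) :
    evalMap k n α v η a j = v j * (polV k η a).eval (α j) := by
  simp [evalMap, LinearMap.pi_apply]

lemma TGRS_eq_range {k n : ℕ} (hk : 0 < k) (α v : Fin n → F) (η : F) :
    { c : Fin n → F | ∃ f : F[X], f.natDegree ≤ k ∧ f.coeff k = η * f.coeff (k - 1) ∧
      c = fun j => v j * f.eval (α j) } = ↑(LinearMap.range (evalMap k n α v η)) := by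
  ext c
  constructor
  · rintro ⟨f, hdeg, hcf, rfl⟩
    refine ⟨fun i => f.coeff (i : ℕ), ?_⟩
    have hf : polV k η (fun i : Fin k => f.coeff (i : ℕ)) = f := by
      ext d
      rw [polV_coeff hk]
      split_ifs with h1 h2
      · rfl
      · rw [h2, hcf]
      · exact (Polynomial.coeff_eq_zero_of_natDegree_lt (by omega)).symm
    funext j
    rw [evalMap_apply, hf]
  · rintro ⟨a, rfl⟩
    refine ⟨polV k η a, polV_natDegree_le hk η a, ?_, ?_⟩
    · rw [polV_coeff_k hk]
      congr 1
      exact (polV_coeff_lt η a ⟨k - 1, by omega⟩).symm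
    · funext j
      rw [evalMap_apply]

lemma evalMap_injective {k n : ℕ} (hk : 0 < k) (hkn : k < n) (α v : Fin n → F)
    (hα : Function.Injective α) (hv : ∀ j, v j ≠ 0) (η : F) :
    Function.Injective (evalMap k n α v η) := by
  rw [← LinearMap.ker_eq_bot, Submodule.eq_bot_iff]
  intro a ha
  rw [LinearMap.mem_ker] at ha
  have hz : polV k η a = 0 := by
    refine Polynomial.eq_zero_of_natDegree_lt_card_of_eval_eq_zero _ hα (fun j => ?_) ?_
    · have := congrFun ha j
      rw [evalMap_apply] at this
      exact (mul_eq_zero.mp this).resolve_left (hv j)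
    · calc (polV k η a).natDegree ≤ k := polV_natDegree_le hk η a
        _ < Fintype.card (Fin n) := by simp [hkn]
  funext i
  have := polV_coeff_lt η a i
  rw [hz] at this
  simpa using this.symm

lemma coeff_mul_top {k : ℕ} (hk : 0 < k) (f g : F[X]) (hf : f.natDegree ≤ k)
    (hg : g.natDegree ≤ k) : (f * g).coeff (2 * k) = f.coeff k * g.coeff k := by
  rw [Polynomial.coeff_mul, Finset.Nat.sum_antidiagonal_eq_sum_range_succ_mk]
  rw [Finset.sum_eq_single k]
  · congr 1; congr 1; omega
  · intro i hi hne
    rcases lt_or_gt_of_ne hne with h | h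
    · rw [Polynomial.coeff_eq_zero_of_natDegree_lt (show g.natDegree < 2 * k - i by omega),
        mul_zero]
    · rw [Polynomial.coeff_eq_zero_of_natDegree_lt (show f.natDegree < i by omega), zero_mul]
  · intro h
    exact absurd (Finset.mem_range.mpr (by omega)) h

lemma coeff_mul_subtop {k : ℕ} (hk : 0 < k) (f g : F[X]) (hf : f.natDegree ≤ k)
    (hg : g.natDegree ≤ k) :
    (f * g).coeff (2 * k - 1) =
      f.coeff (k - 1) * g.coeff k + f.coeff k * g.coeff (k - 1) := by
  rw [Polynomial.coeff_mul, Finset.Nat.sum_antidiagonal_eq_sum_range_succ_mk]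
  have hsub : ({k - 1, k} : Finset ℕ) ⊆ Finset.range (2 * k - 1 + 1) := by
    intro x hx
    simp only [Finset.mem_insert, Finset.mem_singleton] at hx
    rcases hx with rfl | rfl <;> exact Finset.mem_range.mpr (by omega)
  rw [← Finset.sum_subset hsub, Finset.sum_pair (show k - 1 ≠ k by omega),
    show 2 * k - 1 - (k - 1) = k by omega, show 2 * k - 1 - k = k - 1 by omega]
  · intro i hi hni
    simp only [Finset.mem_insert, Finset.mem_singleton, not_or] at hni
    rw [Finset.mem_range] at hi
    rcases lt_or_ge i (k - 1) with h | h
    · rw [Polynomial.coeff_eq_zero_of_natDegree_lt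
        (show g.natDegree < 2 * k - 1 - i by omega), mul_zero]
    · rw [Polynomial.coeff_eq_zero_of_natDegree_lt (show f.natDegree < i by omega), zero_mul]

/-- The main orthogonality computation. -/
lemma orth_sum {k : ℕ} (hk : 0 < k) (α v : Fin (2 * k) → F) (hα : Function.Injective α)
    (hv : ∀ j, v j ^ 2 = -(∏ i ∈ Finset.univ.erase j, (α j - α i))⁻¹)
    (η : F) (hcond : 2 * η + η ^ 2 * ∑ j, α j = 0)
    (f g : F[X]) (hf : f.natDegree ≤ k) (hcf : f.coeff k = η * f.coeff (k - 1))
    (hg : g.natDegree ≤ k) (hcg : g.coeff k = η * g.coeff (k - 1)) :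
    ∑ j, (v j * f.eval (α j)) * (v j * g.eval (α j)) = 0 := by
  haveI : NeZero (2 * k) := ⟨by omega⟩
  set P : F[X] := ∏ j : Fin (2 * k), (X - C (α j)) with hP
  have hPmonic : P.Monic := monic_prod_of_monic _ _ fun j _ => monic_X_sub_C _
  have hPdeg : P.natDegree = 2 * k := by
    rw [hP, Polynomial.natDegree_prod _ _ fun j _ => X_sub_C_ne_zero (α j)]
    simp [Polynomial.natDegree_X_sub_C]
  set c : F := f.coeff k * g.coeff k with hc
  set h : F[X] := f * g - C c * P with hh
  have hfg_deg : (f * g).natDegree ≤ 2 * k :=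
    le_trans (Polynomial.natDegree_mul_le) (by omega)
  have hCP_deg : (C c * P).natDegree ≤ 2 * k :=
    le_trans (Polynomial.natDegree_mul_le) (by simp [hPdeg, Polynomial.natDegree_C])
  have hhdeg : h.degree < (2 * k : ℕ) := by
    rw [Polynomial.degree_lt_iff_coeff_zero]
    intro m hm
    rcases eq_or_lt_of_le hm with rfl | hm'
    · rw [hh, Polynomial.coeff_sub, coeff_mul_top hk f g hf hg, Polynomial.coeff_C_mul,
        ← hPdeg, hPmonic.coeff_natDegree, mul_one, hc, sub_self]
    · rw [hh, Polynomial.coeff_sub,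
        Polynomial.coeff_eq_zero_of_natDegree_lt (lt_of_le_of_lt hfg_deg hm'),
        Polynomial.coeff_eq_zero_of_natDegree_lt (lt_of_le_of_lt hCP_deg hm'), sub_self]
  have hPcoeff : P.coeff (2 * k - 1) = -∑ j, α j := by
    have := Polynomial.prod_X_sub_C_coeff_card_pred (univ : Finset (Fin (2 * k))) α
      (by simp; omega)
    simpa using this
  have hhcoeff : h.coeff (2 * k - 1) = 0 := by
    rw [hh, Polynomial.coeff_sub, coeff_mul_subtop hk f g hf hg, Polynomial.coeff_C_mul,
      hPcoeff, hcf, hcg, hc, hcf, hcg]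
    have : 2 * η * (f.coeff (k-1) * g.coeff (k-1)) +
        η ^ 2 * (∑ j, α j) * (f.coeff (k-1) * g.coeff (k-1)) = 0 := by
      rw [← add_mul, hcond, zero_mul]
    ring_nf
    ring_nf at this
    linear_combination this
  have hkey := keySum α hα h hhdeg
  have heval : ∀ j, h.eval (α j) = f.eval (α j) * g.eval (α j) := by
    intro j
    rw [hh, Polynomial.eval_sub, Polynomial.eval_mul, Polynomial.eval_mul, Polynomial.eval_C,
      hP, Polynomial.eval_prod]
    rw [Finset.prod_eq_zero (Finset.mem_univ j) (by simp)]
    ring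
  calc ∑ j, (v j * f.eval (α j)) * (v j * g.eval (α j))
      = ∑ j, -((∏ i ∈ Finset.univ.erase j, (α j - α i))⁻¹ * h.eval (α j)) := by
        refine Finset.sum_congr rfl fun j _ => ?_
        rw [heval j]
        have := hv j
        rw [pow_two] at this
        calc (v j * f.eval (α j)) * (v j * g.eval (α j))
            = (v j * v j) * (f.eval (α j) * g.eval (α j)) := by ring
          _ = _ := by rw [this]; ring
    _ = -(∑ j, (∏ i ∈ Finset.univ.erase j, (α j - α i))⁻¹ * h.eval (α j)) := by
        rw [Finset.sum_neg_distrib]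
    _ = 0 := by rw [hkey, hhcoeff, neg_zero]

/-- The standard "dot product" map into the dual space. -/
def dotDual (n : ℕ) : (Fin n → F) →ₗ[F] Module.Dual F (Fin n → F) where
  toFun x := ∑ i, x i • (LinearMap.proj i : (Fin n → F) →ₗ[F] F)
  map_add' x y := by
    simp only [Pi.add_apply, add_smul, Finset.sum_add_distrib]
  map_smul' c x := by
    simp only [Pi.smul_apply, smul_eq_mul, RingHom.id_apply, Finset.smul_sum, smul_smul]

lemma dotDual_apply {n : ℕ} (x y : Fin n → F) : dotDual n x y = ∑ i, x i * y i := by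
  simp [dotDual, LinearMap.sum_apply]

lemma dotDual_injective (n : ℕ) : Function.Injective (dotDual (F := F) n) := by
  rw [← LinearMap.ker_eq_bot, Submodule.eq_bot_iff]
  intro x hx
  rw [LinearMap.mem_ker] at hx
  funext j
  have := congrArg (fun φ => φ (Pi.single j 1)) hx
  simp only [dotDual_apply (F := F)] at this
  · simpa [Pi.single_apply, Finset.sum_ite_eq', mul_ite] using this

lemma dual_eq_of_self_orth {n : ℕ} (W : Submodule F (Fin n → F))
    (hfr : 2 * Module.finrank F W = n)
    (horth : ∀ x ∈ W, ∀ y ∈ W, ∑ i, x i * y i = 0) :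
    dualCode (W : Set (Fin n → F)) = ↑W := by
  classical
  have hbij : Function.Bijective (dotDual (F := F) n) := by
    refine ⟨dotDual_injective n, ?_⟩
    rw [← LinearMap.injective_iff_surjective_of_finrank_eq_finrank
      (Subspace.dual_finrank_eq (K := F) (V := Fin n → F)).symm]
    exact dotDual_injective n
  set e : (Fin n → F) ≃ₗ[F] Module.Dual F (Fin n → F) := LinearEquiv.ofBijective _ hbij with he
  set Wd : Submodule F (Fin n → F) := W.dualAnnihilator.comap (dotDual n) with hWd
  have hset : dualCode (W : Set (Fin n → F)) = ↑Wd := by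
    ext x
    simp only [dualCode, Set.mem_setOf_eq, hWd, SetLike.mem_coe, Submodule.mem_comap,
      Submodule.mem_dualAnnihilator]
    constructor
    · intro hx w hw
      rw [dotDual_apply]
      exact hx w hw
    · intro hx w hw
      have := hx w hw
      rwa [dotDual_apply] at this
  have hcomap : Wd = Submodule.map (e.symm : Module.Dual F (Fin n → F) →ₗ[F] Fin n → F) W.dualAnnihilator := by
    have h := Submodule.comap_equiv_eq_map_symm e W.dualAnnihilator
    rw [hWd]
    exact h
  have hfrWd : Module.finrank F Wd = Module.finrank F W.dualAnnihilator := by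
    rw [hcomap]
    exact (LinearEquiv.finrank_map_eq _ _)
  have hann : Module.finrank F W.dualAnnihilator + Module.finrank F W
      = Module.finrank F (Fin n → F) := by
    have h1 : Module.finrank F ((Fin n → F) ⧸ W)
        = Module.finrank F W.dualAnnihilator :=
      LinearEquiv.finrank_eq (Subspace.quotEquivAnnihilator W)
    rw [← h1]
    exact Submodule.finrank_quotient_add_finrank W
  have hWle : W ≤ Wd := by
    intro x hx
    rw [hWd, Submodule.mem_comap, Submodule.mem_dualAnnihilator]
    intro w hw
    rw [dotDual_apply]
    exact horth x hx w hw
  have hfin : Module.finrank F (Fin n → F) = n := Module.finrank_fin_fun F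
  have : W = Wd := by
    refine Submodule.eq_of_le_of_finrank_le hWle ?_
    rw [hfrWd]
    omega
  rw [hset, ← this]

end
end Stmt17Aux

/-- construction of self-dual (+)-TGRS codes over `F_{p^{2m}}` from a
generator of `F_{p^m}^*`. -/
theorem stmt17 {p m : ℕ} (hp : p.Prime) (hpodd : Odd p) (hm : 0 < m)
    {F : Type*} [Field F] [Fintype F] [DecidableEq F]
    (hF : Fintype.card F = p ^ (2 * m))
    (γ : F) (hγ0 : γ ≠ 0) (hγsub : γ ^ (p ^ m) = γ) (hγord : orderOf γ = p ^ m - 1)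
    {k : ℕ} (hk : 3 ≤ k) (hk2 : 2 * k ≤ p ^ m - 1)
    (i0 : ℕ) (hi01 : 1 ≤ i0) (hi0k : i0 ≤ k)
    (η : F) (hη : η = 2 * (γ ^ i0)⁻¹)
    (α : Fin (2 * k) → F)
    (hα : ∀ j : Fin (2 * k), α j =
      if (j : ℕ) < k then (if (j : ℕ) + 1 = i0 then 0 else γ ^ ((j : ℕ) + 1))
      else -γ ^ ((j : ℕ) - k + 1)) :
    Function.Injective α ∧
    (∃ v : Fin (2 * k) → F, (∀ j, v j ≠ 0) ∧
      ∀ j, v j ^ 2 = -(∏ i ∈ Finset.univ.erase j, (α j - α i))⁻¹) ∧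
    (∀ v : Fin (2 * k) → F, (∀ j, v j ≠ 0) →
      (∀ j, v j ^ 2 = -(∏ i ∈ Finset.univ.erase j, (α j - α i))⁻¹) →
      TGRS k (2 * k) α v η = dualCode (TGRS k (2 * k) α v η)) := by
  classical
  have hk0 : 0 < k := by omega
  have hpm1 : 1 ≤ p ^ m := Nat.one_le_pow _ _ hp.pos
  have hpm0 : p ^ m ≠ 0 := by omega
  have hpmodd : Odd (p ^ m) := hpodd.pow
  -- characteristic facts
  have hchar : CharP F p := by
    have h1 : CharP F (ringChar F) := ringChar.charP F
    obtain ⟨n, hprime, hcard⟩ := FiniteField.card F (ringChar F)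
    have hdvd : p ∣ Fintype.card F := by
      rw [hF]
      exact dvd_pow_self p (by omega)
    rw [hcard] at hdvd
    have : p ∣ ringChar F := hp.dvd_of_dvd_pow hdvd
    have hpe : p = ringChar F := (Nat.prime_dvd_prime_iff_eq hp hprime).mp this
    rw [hpe]
    exact h1
  haveI := hchar
  haveI : Fact p.Prime := ⟨hp⟩
  have hp2 : p ≠ 2 := by rcases hpodd with ⟨t, ht⟩; omega
  have h2F : (2 : F) ≠ 0 := by
    intro h
    have h2 : ((2 : ℕ) : F) = 0 := by exact_mod_cast h
    have := (CharP.cast_eq_zero_iff F p 2).mp h2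
    have := Nat.le_of_dvd (by omega) this
    have := hp.two_le
    omega
  have hringchar2 : ringChar F ≠ 2 := by
    have : ringChar F = p := (CharP.eq F (ringChar.charP F) hchar)
    omega
  -- powers of γ
  set N : ℕ := p ^ m - 1 with hNdef
  have hNk : 2 * k ≤ N := hk2
  have hdvd1 : ∀ t : ℕ, γ ^ t = 1 → N ∣ t := fun t ht => by
    rw [← hγord]; exact orderOf_dvd_of_pow_eq_one ht
  have hcancel : ∀ s t : ℕ, s ≤ t → t - s < N → γ ^ s = γ ^ t → s = t := by
    intro s t hst hlt heq
    have h1 : γ ^ t = γ ^ (t - s) * γ ^ s := by rw [← pow_add]; congr 1; omega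
    have h2 : γ ^ (t - s) * γ ^ s = 1 * γ ^ s := by rw [← h1, ← heq, one_mul]
    have h3 : γ ^ (t - s) = 1 := mul_right_cancel₀ (pow_ne_zero s hγ0) h2
    have h4 := hdvd1 _ h3
    rcases Nat.eq_zero_or_pos (t - s) with h | h
    · omega
    · exact absurd (Nat.le_of_dvd h h4) (by omega)
  have hpowinj : ∀ a b : ℕ, a ≤ k → b ≤ k → γ ^ a = γ ^ b → a = b := by
    intro a b ha hb heq
    rcases le_total a b with h | h
    · exact hcancel a b h (by omega) heq
    · exact (hcancel b a h (by omega) heq.symm).symm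
  have hnegne : ∀ a b : ℕ, 1 ≤ a → a ≤ k → 1 ≤ b → b ≤ k → γ ^ a ≠ -γ ^ b := by
    intro a b ha1 hak hb1 hbk heq
    have hsq : γ ^ (2 * a) = γ ^ (2 * b) := by
      have h2 : (γ ^ a) ^ 2 = (γ ^ b) ^ 2 := by rw [heq, neg_sq]
      rw [mul_comm 2 a, mul_comm 2 b, pow_mul, pow_mul]
      exact h2
    have hab : a = b := by
      rcases le_total a b with h | h
      · have := hcancel (2 * a) (2 * b) (by omega) (by omega) hsq
        omega
      · have := hcancel (2 * b) (2 * a) (by omega) (by omega) hsq.symm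
        omega
    rw [hab] at heq
    have h0 : (2 : F) * γ ^ b = 0 := by linear_combination heq
    rcases mul_eq_zero.mp h0 with h | h
    · exact h2F h
    · exact pow_ne_zero b hγ0 h
  -- injectivity of α
  have hainj : Function.Injective α := by
    intro j1 j2 heq
    have hj1 := j1.isLt
    have hj2 := j2.isLt
    rw [hα j1, hα j2] at heq
    by_cases h1 : (j1 : ℕ) < k <;> by_cases h2 : (j2 : ℕ) < k
    · rw [if_pos h1, if_pos h2] at heq
      by_cases z1 : (j1 : ℕ) + 1 = i0 <;> by_cases z2 : (j2 : ℕ) + 1 = i0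
      · exact Fin.ext (by omega)
      · rw [if_pos z1, if_neg z2] at heq
        exact absurd heq.symm (pow_ne_zero _ hγ0)
      · rw [if_neg z1, if_pos z2] at heq
        exact absurd heq (pow_ne_zero _ hγ0)
      · rw [if_neg z1, if_neg z2] at heq
        have := hpowinj _ _ (by omega) (by omega) heq
        exact Fin.ext (by omega)
    · rw [if_pos h1, if_neg h2] at heq
      exfalso
      by_cases z1 : (j1 : ℕ) + 1 = i0
      · rw [if_pos z1] at heq
        exact pow_ne_zero _ hγ0 (neg_eq_zero.mp heq.symm)
      · rw [if_neg z1] at heq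
        exact hnegne _ _ (by omega) (by omega) (by omega) (by omega) heq
    · rw [if_neg h1, if_pos h2] at heq
      exfalso
      by_cases z2 : (j2 : ℕ) + 1 = i0
      · rw [if_pos z2] at heq
        exact pow_ne_zero _ hγ0 (neg_eq_zero.mp heq)
      · rw [if_neg z2] at heq
        exact hnegne _ _ (by omega) (by omega) (by omega) (by omega) heq.symm
    · rw [if_neg h1, if_neg h2] at heq
      have heq2 : γ ^ ((j1 : ℕ) - k + 1) = γ ^ ((j2 : ℕ) - k + 1) := neg_injective heq
      have := hpowinj _ _ (by omega) (by omega) heq2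
      exact Fin.ext (by omega)
  -- the sum of the evaluation points
  have hS : ∑ j, α j = -γ ^ i0 := by
    set Sf : ℕ → F := fun t =>
      if t < k then (if t + 1 = i0 then 0 else γ ^ (t + 1)) else -γ ^ (t - k + 1) with hSf
    have h1 : ∑ j, α j = ∑ j : Fin (2 * k), Sf (j : ℕ) :=
      Finset.sum_congr rfl fun j _ => hα j
    rw [h1, Fin.sum_univ_eq_sum_range Sf (2 * k)]
    rw [Finset.range_eq_Ico, ← Finset.sum_Ico_consecutive _ (by omega : 0 ≤ k)
      (by omega : k ≤ 2 * k)]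
    have e1 : ∑ t ∈ Finset.Ico 0 k, Sf t
        = (∑ t ∈ Finset.range k, γ ^ (t + 1)) - γ ^ i0 := by
      rw [← Finset.range_eq_Ico]
      have hterm : ∀ t ∈ Finset.range k,
          Sf t = γ ^ (t + 1) - (if t + 1 = i0 then γ ^ (t + 1) else 0) := by
        intro t ht
        rw [Finset.mem_range] at ht
        rw [hSf]
        simp only
        rw [if_pos ht]
        split_ifs with h
        · simp
        · simp
      rw [Finset.sum_congr rfl hterm, Finset.sum_sub_distrib]
      congr 1
      rw [Finset.sum_eq_single (i0 - 1)]
      · rw [if_pos (by omega)]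
        congr 1
        omega
      · intro t _ hne
        exact if_neg (by omega)
      · intro h
        exact absurd (Finset.mem_range.mpr (by omega)) h
    have e2 : ∑ t ∈ Finset.Ico k (2 * k), Sf t
        = -∑ t ∈ Finset.range k, γ ^ (t + 1) := by
      rw [Finset.sum_Ico_eq_sum_range, show 2 * k - k = k by omega, ← Finset.sum_neg_distrib]
      refine Finset.sum_congr rfl fun t ht => ?_
      rw [hSf]
      simp only
      rw [if_neg (by omega)]
      congr 2
      omega
    rw [e1, e2]
    ring
  have hγi0 : γ ^ i0 ≠ 0 := pow_ne_zero _ hγ0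
  have hcond : 2 * η + η ^ 2 * ∑ j, α j = 0 := by
    rw [hS, hη]
    field_simp
    ring
  -- the quadratic residues
  have hPne : ∀ j : Fin (2 * k), (∏ i ∈ Finset.univ.erase j, (α j - α i)) ≠ 0 := by
    intro j
    refine Finset.prod_ne_zero_iff.mpr fun i hi => sub_ne_zero_of_ne fun hh => ?_
    exact (Finset.mem_erase.mp hi).1 (hainj hh.symm)
  have hune : ∀ j : Fin (2 * k), -(∏ i ∈ Finset.univ.erase j, (α j - α i))⁻¹ ≠ 0 :=
    fun j => neg_ne_zero.mpr (inv_ne_zero (hPne j))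
  have hfix : ∀ j, (α j) ^ (p ^ m) = α j := by
    intro j
    rw [hα j]
    split_ifs with h1 h2
    · exact zero_pow hpm0
    · rw [← pow_mul, mul_comm, pow_mul, hγsub]
    · rw [hpmodd.neg_pow, ← pow_mul, mul_comm, pow_mul, hγsub]
  have hufix : ∀ j : Fin (2 * k),
      (-(∏ i ∈ Finset.univ.erase j, (α j - α i))⁻¹) ^ (p ^ m)
        = -(∏ i ∈ Finset.univ.erase j, (α j - α i))⁻¹ := by
    intro j
    have hmap : iterateFrobenius F p m (-(∏ i ∈ Finset.univ.erase j, (α j - α i))⁻¹)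
        = -(∏ i ∈ Finset.univ.erase j, (α j - α i))⁻¹ := by
      rw [map_neg, map_inv₀, map_prod]
      congr 2
      refine Finset.prod_congr rfl fun i _ => ?_
      rw [map_sub, iterateFrobenius_def, iterateFrobenius_def, hfix, hfix]
    rw [← iterateFrobenius_def, hmap]
  have husq : ∀ j : Fin (2 * k),
      IsSquare (-(∏ i ∈ Finset.univ.erase j, (α j - α i))⁻¹) := by
    intro j
    rw [FiniteField.isSquare_iff hringchar2 (hune j)]
    obtain ⟨s, hs⟩ : ∃ s, p ^ m + 1 = 2 * s := by
      rcases hpmodd with ⟨t, ht⟩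
      exact ⟨t + 1, by omega⟩
    have hc2 : Fintype.card F / 2 = (p ^ m - 1) * s := by
      rw [hF]
      have hqq : p ^ (2 * m) = p ^ m * p ^ m := by rw [two_mul, pow_add]
      have key : p ^ m * p ^ m = 2 * ((p ^ m - 1) * s) + 1 := by
        obtain ⟨t, ht⟩ := Nat.exists_eq_add_of_le hpm1
        have h2 : p ^ m * p ^ m = (p ^ m - 1) * (p ^ m + 1) + 1 := by
          rw [ht]
          have : 1 + t - 1 = t := by omega
          rw [this]
          ring
        rw [h2, hs]
        ring
      rw [hqq]
      omega
    rw [hc2, pow_mul]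
    have hu1 : (-(∏ i ∈ Finset.univ.erase j, (α j - α i))⁻¹) ^ (p ^ m - 1) = 1 := by
      have h1 : (-(∏ i ∈ Finset.univ.erase j, (α j - α i))⁻¹) ^ (p ^ m)
          = (-(∏ i ∈ Finset.univ.erase j, (α j - α i))⁻¹) ^ (p ^ m - 1)
            * (-(∏ i ∈ Finset.univ.erase j, (α j - α i))⁻¹) := by
        rw [← pow_succ]
        congr 1
        omega
      have h2 := hufix j
      rw [h1] at h2
      exact mul_right_cancel₀ (hune j) (h2.trans (one_mul _).symm)
    rw [hu1, one_pow]
  choose r hr using husq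
  refine ⟨hainj, ⟨r, ?_, ?_⟩, ?_⟩
  · intro j h0
    have := hr j
    rw [h0, mul_zero] at this
    exact hune j this
  · intro j
    rw [pow_two, ← hr j]
  -- self-duality
  · intro v hv hvsq
    set W := LinearMap.range (Stmt17Aux.evalMap k (2 * k) α v η) with hW
    have hset : TGRS k (2 * k) α v η = ↑W := Stmt17Aux.TGRS_eq_range hk0 α v η
    have hfr : Module.finrank F ↥W = k := by
      rw [hW, LinearMap.finrank_range_of_inj
        (Stmt17Aux.evalMap_injective hk0 (by omega) α v hainj hv η)]
      simp
    rw [hset]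
    refine (Stmt17Aux.dual_eq_of_self_orth W (by omega) ?_).symm
    intro x hx y hy
    obtain ⟨a, rfl⟩ := LinearMap.mem_range.mp hx
    obtain ⟨b, rfl⟩ := LinearMap.mem_range.mp hy
    have hca : (Stmt17Aux.polV k η a).coeff k = η * (Stmt17Aux.polV k η a).coeff (k - 1) := by
      rw [Stmt17Aux.polV_coeff_k hk0 η a]
      congr 1
      exact (Stmt17Aux.polV_coeff_lt η a ⟨k - 1, by omega⟩).symm
    have hcb : (Stmt17Aux.polV k η b).coeff k = η * (Stmt17Aux.polV k η b).coeff (k - 1) := by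
      rw [Stmt17Aux.polV_coeff_k hk0 η b]
      congr 1
      exact (Stmt17Aux.polV_coeff_lt η b ⟨k - 1, by omega⟩).symm
    have horth := Stmt17Aux.orth_sum hk0 α v hainj hvsq η hcond
      (Stmt17Aux.polV k η a) (Stmt17Aux.polV k η b)
      (Stmt17Aux.polV_natDegree_le hk0 η a) hca
      (Stmt17Aux.polV_natDegree_le hk0 η b) hcb
    simp only [Stmt17Aux.evalMap_apply]
    exact horth
end

section
/- Let p be an odd prime, m a positive integer, q = p^{2m}, and regard F_{p^m} as a subfield of F_q. Let γ be a generator of the cyclic group F_{p^m}^*, let 3 ≤ k ≤ (p^m − 1)/2, let α = (γ, γ², …, γ^k, −γ, −γ², …, −γ^k) ∈ F_q^{2k}, and let η ∈ F_q^*. Then the entries of α are pairwise distinct, and for every v = (v_1,…,v_{2k}) ∈ (F_q^*)^{2k} satisfying v_j² = −(2η)^{−1}·∏_{1≤i≤2k, i≠j} (α_j − α_i)^{−1} for all j, the (+)-ETGRS code C_{k,2k}(α,v,η,∞) is almost self-dual; moreover this code is MDS if η ∉ F_{p^m}, and it is NMDS if N(k, −η^{−1}, A_α) > 0. -/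
open Polynomial

/-! ### Auxiliary lemmas -/

section helpers2
open Finset
set_option linter.unusedSectionVars false
variable {F : Type*} [Field F] [DecidableEq F] {ι : Type*} [DecidableEq ι]

lemma helper_card_roots (T : Finset ι) (β : ι → F) (hβ : Set.InjOn β T) {f : F[X]} (hf : f ≠ 0)
    (hroot : ∀ j ∈ T, f.eval (β j) = 0) : T.card ≤ f.natDegree := by
  have h1 : (T.image β).card = T.card := Finset.card_image_of_injOn hβ
  rw [← h1]
  apply Polynomial.card_le_degree_of_subset_roots
  intro a ha
  rw [Finset.mem_val, Finset.mem_image] at ha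
  obtain ⟨j, hj, rfl⟩ := ha
  rw [Polynomial.mem_roots hf]
  exact hroot j hj

lemma helper_eq_zero (T : Finset ι) (β : ι → F) (hβ : Set.InjOn β T) {f : F[X]} {d : ℕ}
    (hdeg : f.natDegree ≤ d) (hcard : d < T.card) (hroot : ∀ j ∈ T, f.eval (β j) = 0) :
    f = 0 := by
  by_contra hf
  exact absurd (helper_card_roots T β hβ hf hroot) (by omega)

lemma lag1 (T : Finset ι) (β : ι → F) (hβ : Set.InjOn β T) {f : F[X]}
    (hf : f.degree < T.card) :
    ∑ j ∈ T, (∏ i ∈ T.erase j, (β j - β i))⁻¹ * f.eval (β j) = f.coeff (T.card - 1) := by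
  conv_rhs => rw [Lagrange.eq_interpolate hβ hf]
  rw [Lagrange.interpolate_apply, Polynomial.finset_sum_coeff]
  refine Finset.sum_congr rfl fun j hj => ?_
  rw [Polynomial.coeff_C_mul]
  have hbasis : (Lagrange.basis T β j) =
      C (∏ i ∈ T.erase j, (β j - β i)⁻¹) * ∏ i ∈ T.erase j, (X - C (β i)) := by
    rw [Lagrange.basis]
    simp_rw [Lagrange.basisDivisor, map_prod]
    rw [Finset.prod_mul_distrib]
  rw [hbasis, Polynomial.coeff_C_mul]
  have hmon : (∏ i ∈ T.erase j, (X - C (β i))).Monic :=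
    monic_prod_of_monic _ _ fun i _ => monic_X_sub_C _
  have hdeg : (∏ i ∈ T.erase j, (X - C (β i))).natDegree = T.card - 1 := by
    rw [natDegree_prod_of_monic _ _ fun i _ => monic_X_sub_C _]
    simp [Finset.card_erase_of_mem hj]
  have : (∏ i ∈ T.erase j, (X - C (β i))).coeff (T.card - 1) = 1 := by
    rw [← hdeg]; exact hmon.coeff_natDegree
  rw [this, mul_one, ← Finset.prod_inv_distrib]
  ring

lemma lag2 (T : Finset ι) (β : ι → F) (hβ : Set.InjOn β T) (hT : T.Nonempty) {f : F[X]}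
    (hf : f.natDegree ≤ T.card) :
    ∑ j ∈ T, (∏ i ∈ T.erase j, (β j - β i))⁻¹ * f.eval (β j)
      = f.coeff (T.card - 1) + f.coeff T.card * ∑ j ∈ T, β j := by
  have hT0 : 0 < T.card := hT.card_pos
  have hPdeg : (Lagrange.nodal T β).natDegree = T.card := Lagrange.natDegree_nodal
  have hPtop : (Lagrange.nodal T β).coeff T.card = 1 := by
    conv_lhs => rw [← hPdeg]
    exact Lagrange.nodal_monic.coeff_natDegree
  have hgdeg : (f - C (f.coeff T.card) * Lagrange.nodal T β).degree < (T.card : ℕ) := by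
    rw [Polynomial.degree_lt_iff_coeff_zero]
    intro m hm
    rw [Polynomial.coeff_sub, Polynomial.coeff_C_mul]
    have hm' : T.card ≤ m := by exact_mod_cast hm
    rcases eq_or_lt_of_le hm' with h | h
    · rw [← h, hPtop, mul_one, sub_self]
    · have e1 : f.coeff m = 0 :=
        Polynomial.coeff_eq_zero_of_natDegree_lt (lt_of_le_of_lt hf h)
      have e2 : (Lagrange.nodal T β).coeff m = 0 :=
        Polynomial.coeff_eq_zero_of_natDegree_lt (by rw [hPdeg]; exact h)
      rw [e1, e2, mul_zero, sub_self]
  have heval : ∀ j ∈ T,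
      (f - C (f.coeff T.card) * Lagrange.nodal T β).eval (β j) = f.eval (β j) := by
    intro j hj
    rw [Polynomial.eval_sub, Polynomial.eval_mul, Lagrange.eval_nodal_at_node hj,
      mul_zero, sub_zero]
  have h1 := lag1 T β hβ hgdeg
  rw [Finset.sum_congr rfl (fun j hj => by rw [heval j hj])] at h1
  have hPc : (Lagrange.nodal T β).coeff (T.card - 1) = -∑ j ∈ T, β j := by
    rw [Lagrange.nodal_eq]
    exact Polynomial.prod_X_sub_C_coeff_card_pred T β hT0
  rw [h1, Polynomial.coeff_sub, Polynomial.coeff_C_mul, hPc]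
  ring

lemma vand (T : Finset ι) (β : ι → F) (hβ : Set.InjOn β T) (y : ι → F) {t : ℕ}
    (hcard : T.card ≤ t) (h : ∀ i < t, ∑ j ∈ T, y j * β j ^ i = 0) :
    ∀ j ∈ T, y j = 0 := by
  intro j hj
  set g : F[X] := ∏ i ∈ T.erase j, (X - C (β i)) with hgdef
  have hdeg : g.natDegree = T.card - 1 := by
    rw [hgdef, natDegree_prod_of_monic _ _ fun i _ => monic_X_sub_C _]
    simp [Finset.card_erase_of_mem hj]
  have hsum : ∑ l ∈ T, y l * g.eval (β l) = 0 := by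
    have hrw : ∀ l ∈ T, y l * g.eval (β l) =
        ∑ i ∈ Finset.range (g.natDegree + 1), g.coeff i * (y l * β l ^ i) := by
      intro l _
      rw [Polynomial.eval_eq_sum_range, Finset.mul_sum]
      exact Finset.sum_congr rfl fun i _ => by ring
    rw [Finset.sum_congr rfl hrw, Finset.sum_comm]
    apply Finset.sum_eq_zero
    intro i hi
    have h1 : 0 < T.card := Finset.card_pos.mpr ⟨j, hj⟩
    rw [Finset.mem_range, hdeg] at hi
    rw [← Finset.mul_sum, h i (by omega), mul_zero]
  have hsingle : ∑ l ∈ T, y l * g.eval (β l) = y j * g.eval (β j) := by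
    apply Finset.sum_eq_single j
    · intro l hl hlj
      have : g.eval (β l) = 0 := by
        rw [hgdef, Polynomial.eval_prod]
        exact Finset.prod_eq_zero (Finset.mem_erase.mpr ⟨hlj, hl⟩) (by simp)
      rw [this, mul_zero]
    · intro hjT; exact absurd hj hjT
  have hne : g.eval (β j) ≠ 0 := by
    rw [hgdef, Polynomial.eval_prod]
    apply Finset.prod_ne_zero_iff.mpr
    intro i hi
    rcases Finset.mem_erase.mp hi with ⟨hij, hiT⟩
    simp only [Polynomial.eval_sub, Polynomial.eval_X, Polynomial.eval_C, sub_ne_zero]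
    exact fun he => hij (hβ hiT hj he.symm)
  rw [hsingle] at hsum
  exact (mul_eq_zero.mp hsum).resolve_right hne

lemma hn_snoc {n : ℕ} (b : Fin n → F) (a : F) :
    hammingNorm (Fin.snoc b a : Fin (n+1) → F) = hammingNorm b + if a ≠ 0 then 1 else 0 := by
  unfold hammingNorm
  rw [Finset.card_filter, Finset.card_filter, Fin.sum_univ_castSucc]
  simp only [Fin.snoc_castSucc, Fin.snoc_last]

lemma charp_of_card {p m : ℕ} [Fintype F] (hp : p.Prime) (hm : 0 < m)
    (hF : Fintype.card F = p ^ (2 * m)) : CharP F p := by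
  haveI : CharP F (ringChar F) := ringChar.charP F
  have hr : (ringChar F).Prime := CharP.char_is_prime F (ringChar F)
  obtain ⟨n, -, hn⟩ := FiniteField.card F (ringChar F)
  have hdvd : ringChar F ∣ p ^ (2 * m) := by
    rw [← hF, hn]
    exact dvd_pow_self _ (by positivity)
  have : ringChar F = p :=
    (Nat.prime_dvd_prime_iff_eq hr hp).mp (hr.dvd_of_dvd_pow hdvd)
  exact this ▸ ringChar.charP F

lemma two_ne_zero_of_charp {p : ℕ} [CharP F p] (hp : p.Prime) (hpodd : Odd p) :
    (2 : F) ≠ 0 := by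
  have h2 : ((2 : ℕ) : F) ≠ 0 := by
    rw [Ne, CharP.cast_eq_zero_iff F p]
    intro hdvd
    have := (Nat.prime_dvd_prime_iff_eq hp Nat.prime_two).mp hdvd
    rcases hpodd with ⟨t, ht⟩; omega
  simpa using h2

lemma pow_cancel_aux {γ : F} (hγ0 : γ ≠ 0) {o : ℕ} (hord : orderOf γ = o) :
    ∀ a b : ℕ, a ≤ b → b - a < o → γ ^ a = γ ^ b → a = b := by
  intro a b hab hlt h
  have h1 : γ ^ a * γ ^ (b - a) = γ ^ a * 1 := by
    rw [mul_one, ← pow_add, Nat.add_sub_cancel' hab, ← h]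
  have h2 : γ ^ (b - a) = 1 := mul_left_cancel₀ (pow_ne_zero _ hγ0) h1
  have h3 : o ∣ b - a := hord ▸ orderOf_dvd_of_pow_eq_one h2
  have := Nat.eq_zero_of_dvd_of_lt h3 hlt
  omega

lemma alpha_injective {γ : F} (hγ0 : γ ≠ 0) {o k : ℕ} (hord : orderOf γ = o)
    (h2 : (2 : F) ≠ 0) (hk : 1 ≤ k) (hk2 : 2 * k ≤ o) (α : Fin (2 * k) → F)
    (hα : ∀ j : Fin (2 * k), α j =
      if (j : ℕ) < k then γ ^ ((j : ℕ) + 1) else -γ ^ ((j : ℕ) - k + 1)) :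
    Function.Injective α := by
  have hcan := pow_cancel_aux hγ0 hord
  have hpowinj : ∀ a b : ℕ, 1 ≤ a → a ≤ 2 * k → 1 ≤ b → b ≤ 2 * k → γ ^ a = γ ^ b → a = b := by
    intro a b ha1 ha hb1 hb h
    rcases le_total a b with hab | hab
    · exact hcan a b hab (by omega) h
    · exact (hcan b a hab (by omega) h.symm).symm
  have hmix : ∀ a b : ℕ, 1 ≤ a → a ≤ k → 1 ≤ b → b ≤ k → γ ^ a = -γ ^ b → False := by
    intro a b ha1 hak hb1 hbk h
    have hsq : γ ^ (2 * a) = γ ^ (2 * b) := by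
      have : (γ ^ a) ^ 2 = (-γ ^ b) ^ 2 := by rw [h]
      rw [neg_pow, Even.neg_one_pow (by norm_num)] at this
      · rw [two_mul, pow_add, two_mul, pow_add, ← sq, ← sq]
        rw [this]
        ring
    have hab : a = b := by
      have := hpowinj (2 * a) (2 * b) (by omega) (by omega) (by omega) (by omega) hsq
      omega
    subst hab
    have hzero : (2 : F) * γ ^ a = 0 := by
      have : γ ^ a + γ ^ a = γ ^ a + -γ ^ a := by nth_rewrite 2 [h]; rw [h]
      rw [add_neg_cancel] at this
      rw [two_mul]
      exact this
    rcases mul_eq_zero.mp hzero with h' | h'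
    · exact h2 h'
    · exact pow_ne_zero _ hγ0 h'
  intro j1 j2 h
  have hj1 := j1.isLt
  have hj2 := j2.isLt
  rw [hα j1, hα j2] at h
  by_cases c1 : (j1 : ℕ) < k <;> by_cases c2 : (j2 : ℕ) < k
  · rw [if_pos c1, if_pos c2] at h
    have := hpowinj _ _ (by omega) (by omega) (by omega) (by omega) h
    exact Fin.ext (by omega)
  · rw [if_pos c1, if_neg c2] at h
    exact absurd h (by intro h; exact hmix _ _ (by omega) (by omega) (by omega) (by omega) h)
  · rw [if_neg c1, if_pos c2] at h
    exact absurd h.symm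
      (by intro h; exact hmix _ _ (by omega) (by omega) (by omega) (by omega) h)
  · rw [if_neg c1, if_neg c2] at h
    have := hpowinj _ _ (by omega) (by omega) (by omega) (by omega) (neg_inj.mp h)
    exact Fin.ext (by omega)

lemma sum_fixed {p m : ℕ} [CharP F p] (hp : p.Prime) (A : Finset F)
    (hfix : ∀ x ∈ A, x ^ p ^ m = x) : (∑ x ∈ A, x) ^ p ^ m = ∑ x ∈ A, x := by
  haveI : Fact p.Prime := ⟨hp⟩
  classical
  induction A using Finset.induction_on with
  | empty => rw [Finset.sum_empty, zero_pow (pow_pos hp.pos m).ne']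
  | insert _ _ hnotmem ih =>
    rename_i a s
    rw [Finset.sum_insert hnotmem, add_pow_char_pow,
      ih (fun x hx => hfix x (Finset.mem_insert_of_mem hx)),
      hfix a (Finset.mem_insert_self a s)]

end helpers2

/-! ### Codeword helper lemmas -/

noncomputable section cwsec
open Finset
set_option linter.unusedSectionVars false
variable {F : Type*} [Field F]

/-- The codeword map. -/
def cw (k n : ℕ) (α v : Fin n → F) (f : F[X]) : Fin (n + 1) → F :=
  Fin.snoc (fun j => v j * f.eval (α j)) (f.coeff (k - 1))

lemma mem_ETGRS {k n : ℕ} {α v : Fin n → F} {η : F} {c : Fin (n+1) → F} :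
    c ∈ ETGRS k n α v η ↔ ∃ f : F[X], f.natDegree ≤ k ∧
      f.coeff k = η * f.coeff (k - 1) ∧ c = cw k n α v f := Iff.rfl

lemma cw_castSucc {k n : ℕ} {α v : Fin n → F} {f : F[X]} (j : Fin n) :
    cw k n α v f (Fin.castSucc j) = v j * f.eval (α j) := by
  simp [cw]

lemma cw_last {k n : ℕ} {α v : Fin n → F} {f : F[X]} :
    cw k n α v f (Fin.last n) = f.coeff (k - 1) := by
  simp [cw]

lemma cw_zero {k n : ℕ} {α v : Fin n → F} : cw k n α v 0 = 0 := by
  funext x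
  refine Fin.lastCases ?_ (fun j => ?_) x
  · simp [cw_last]
  · simp [cw_castSucc]

lemma cw_sum {k n : ℕ} {α v : Fin n → F} {ι : Type*} (s : Finset ι) (g : ι → F)
    (f : ι → F[X]) :
    cw k n α v (∑ i ∈ s, C (g i) * f i) = ∑ i ∈ s, g i • cw k n α v (f i) := by
  funext x
  rw [Finset.sum_apply]
  refine Fin.lastCases ?_ (fun j => ?_) x
  · rw [cw_last, Polynomial.finset_sum_coeff]
    refine Finset.sum_congr rfl fun i _ => ?_
    rw [Pi.smul_apply, cw_last, Polynomial.coeff_C_mul, smul_eq_mul]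
  · rw [cw_castSucc, Polynomial.eval_finset_sum]
    rw [Finset.mul_sum]
    refine Finset.sum_congr rfl fun i _ => ?_
    rw [Pi.smul_apply, cw_castSucc, Polynomial.eval_mul, Polynomial.eval_C, smul_eq_mul]
    ring

lemma wt_cw {k n : ℕ} [DecidableEq F] {α v : Fin n → F} (hv : ∀ j, v j ≠ 0) (f : F[X]) :
    hammingNorm (cw k n α v f) =
      (n - (univ.filter fun j => f.eval (α j) = 0).card)
        + (if f.coeff (k - 1) ≠ 0 then 1 else 0) := by
  rw [cw, hn_snoc]
  congr 1
  have h1 : hammingNorm (fun j => v j * f.eval (α j))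
      = (univ.filter fun j => ¬ (f.eval (α j) = 0)).card := by
    unfold hammingNorm
    apply congrArg
    apply Finset.filter_congr
    intro j _
    simp [hv j]
  have h2 : (univ.filter fun j => f.eval (α j) = 0).card
      + (univ.filter fun j => ¬ (f.eval (α j) = 0)).card = n := by
    simpa using Finset.card_filter_add_card_filter_not
      (s := (univ : Finset (Fin n))) (p := fun j => f.eval (α j) = 0)
  rw [h1]
  omega

lemma zset_card_le {n : ℕ} [DecidableEq F] {α : Fin n → F} (hinj : Function.Injective α)
    {f : F[X]} (hf : f ≠ 0) {d : ℕ} (hd : f.natDegree ≤ d) :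
    (univ.filter fun j => f.eval (α j) = 0).card ≤ d := by
  refine le_trans (helper_card_roots _ α hinj.injOn hf ?_) hd
  exact fun j hj => (Finset.mem_filter.mp hj).2

lemma twist_decomp {k : ℕ} (hk : 3 ≤ k) {η : F} {f : F[X]} (hf1 : f.natDegree ≤ k)
    (hf2 : f.coeff k = η * f.coeff (k - 1)) :
    ∃ r : F[X], r.natDegree ≤ k - 2 ∧
      f = r + C (f.coeff (k - 1)) * (X ^ (k - 1) + C η * X ^ k) := by
  refine ⟨f - C (f.coeff (k - 1)) * (X ^ (k - 1) + C η * X ^ k), ?_, by ring⟩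
  rw [Polynomial.natDegree_le_iff_coeff_eq_zero]
  intro mm hmm
  rw [Polynomial.coeff_sub, Polynomial.coeff_C_mul, Polynomial.coeff_add,
    Polynomial.coeff_X_pow, Polynomial.coeff_C_mul, Polynomial.coeff_X_pow]
  by_cases h1 : mm = k - 1
  · subst h1
    rw [if_pos rfl, if_neg (by omega)]
    ring
  · by_cases h2 : mm = k
    · subst h2
      rw [if_neg (by omega), if_pos rfl, hf2]
      ring
    · rw [if_neg h1, if_neg h2,
        Polynomial.coeff_eq_zero_of_natDegree_lt (show f.natDegree < mm by omega)]
      ring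

lemma twist_mul_coeff {k : ℕ} (hk : 3 ≤ k) {η : F} {f g : F[X]}
    (hf1 : f.natDegree ≤ k) (hf2 : f.coeff k = η * f.coeff (k - 1))
    (hg1 : g.natDegree ≤ k) (hg2 : g.coeff k = η * g.coeff (k - 1)) :
    (f * g).coeff (2 * k - 1) = 2 * η * (f.coeff (k - 1) * g.coeff (k - 1)) := by
  obtain ⟨r, hr, hfe⟩ := twist_decomp hk hf1 hf2
  obtain ⟨s, hs, hge⟩ := twist_decomp hk hg1 hg2
  have hT : (X ^ (k - 1) + C η * X ^ k : F[X]).natDegree ≤ k := by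
    refine le_trans (Polynomial.natDegree_add_le _ _) ?_
    rw [Polynomial.natDegree_X_pow]
    refine max_le (by omega) (le_trans (Polynomial.natDegree_C_mul_le _ _) ?_)
    rw [Polynomial.natDegree_X_pow]
  have hTT : ((X ^ (k - 1) + C η * X ^ k : F[X]) * (X ^ (k - 1) + C η * X ^ k)).coeff (2 * k - 1)
      = 2 * η := by
    have e1 : (X : F[X]) ^ (k - 1) * X ^ (k - 1) = X ^ (2 * k - 2) := by
      rw [← pow_add]; congr 1; omega
    have e2 : (X : F[X]) ^ (k - 1) * (C η * X ^ k) = C η * X ^ (2 * k - 1) := by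
      rw [mul_left_comm, ← pow_add]; congr 2; omega
    have e3 : (C η * X ^ k : F[X]) * X ^ (k - 1) = C η * X ^ (2 * k - 1) := by
      rw [mul_assoc, ← pow_add]; congr 2; omega
    have e4 : (C η * X ^ k : F[X]) * (C η * X ^ k) = C η * C η * X ^ (2 * k) := by
      rw [mul_mul_mul_comm, ← pow_add]; congr 2; omega
    have c1 : (X ^ (2 * k - 2) : F[X]).coeff (2 * k - 1) = 0 := by
      rw [Polynomial.coeff_X_pow, if_neg (by omega)]
    have c2 : (C η * X ^ (2 * k - 1) : F[X]).coeff (2 * k - 1) = η := by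
      rw [Polynomial.coeff_C_mul, Polynomial.coeff_X_pow, if_pos rfl, mul_one]
    have c3 : (C η * C η * X ^ (2 * k) : F[X]).coeff (2 * k - 1) = 0 := by
      rw [mul_assoc, Polynomial.coeff_C_mul, Polynomial.coeff_C_mul, Polynomial.coeff_X_pow,
        if_neg (by omega)]
      ring
    rw [add_mul, mul_add, mul_add, e1, e2, e3, e4, Polynomial.coeff_add,
      Polynomial.coeff_add, Polynomial.coeff_add, c1, c2, c3]
    ring
  have hz1 : (r * s).coeff (2 * k - 1) = 0 := by
    apply Polynomial.coeff_eq_zero_of_natDegree_lt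
    refine lt_of_le_of_lt (Polynomial.natDegree_mul_le) (by omega)
  have hz2 : (r * (C (g.coeff (k - 1)) * (X ^ (k - 1) + C η * X ^ k))).coeff (2 * k - 1) = 0 := by
    apply Polynomial.coeff_eq_zero_of_natDegree_lt
    refine lt_of_le_of_lt (Polynomial.natDegree_mul_le) ?_
    have := Polynomial.natDegree_C_mul_le (g.coeff (k - 1)) (X ^ (k - 1) + C η * X ^ k)
    omega
  have hz3 : ((C (f.coeff (k - 1)) * (X ^ (k - 1) + C η * X ^ k)) * s).coeff (2 * k - 1) = 0 := by
    apply Polynomial.coeff_eq_zero_of_natDegree_lt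
    refine lt_of_le_of_lt (Polynomial.natDegree_mul_le) ?_
    have := Polynomial.natDegree_C_mul_le (f.coeff (k - 1)) (X ^ (k - 1) + C η * X ^ k)
    omega
  have hmain : ((C (f.coeff (k - 1)) * (X ^ (k - 1) + C η * X ^ k)) *
      (C (g.coeff (k - 1)) * (X ^ (k - 1) + C η * X ^ k))).coeff (2 * k - 1)
      = f.coeff (k - 1) * g.coeff (k - 1) * (2 * η) := by
    rw [mul_mul_mul_comm, ← Polynomial.C_mul, Polynomial.coeff_C_mul, hTT]
  have hexp : ∀ r s u w : F[X], (r + u) * (s + w) = r * s + r * w + (u * s + u * w) := by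
    intros; ring
  conv_lhs => rw [hfe, hge, hexp]
  rw [Polynomial.coeff_add, Polynomial.coeff_add, Polynomial.coeff_add, hz1, hz2, hz3, hmain]
  ring

end cwsec

noncomputable section mainlemmas
open Finset
set_option linter.unusedSectionVars false
variable {F : Type*} [Field F]

lemma etgrs_dim {k : ℕ} {α v : Fin (2 * k) → F} {η : F} (hk : 3 ≤ k)
    (hv : ∀ j, v j ≠ 0) (hinj : Function.Injective α) :
    Module.finrank F (Submodule.span F (ETGRS k (2 * k) α v η)) = k := by
  classical
  set fb : ℕ → F[X] := fun i => if i = k - 1 then X ^ (k - 1) + C η * X ^ k else X ^ i with hfb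
  have hc1 : (X ^ (k - 1) + C η * X ^ k : F[X]).coeff k = η := by
    rw [Polynomial.coeff_add, Polynomial.coeff_X_pow, Polynomial.coeff_C_mul,
      Polynomial.coeff_X_pow, if_neg (by omega), if_pos rfl]
    ring
  have hc2 : (X ^ (k - 1) + C η * X ^ k : F[X]).coeff (k - 1) = 1 := by
    rw [Polynomial.coeff_add, Polynomial.coeff_X_pow, Polynomial.coeff_C_mul,
      Polynomial.coeff_X_pow, if_pos rfl, if_neg (by omega)]
    ring
  have hfb_deg : ∀ i, i < k → (fb i).natDegree ≤ k := by
    intro i hi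
    simp only [hfb]
    by_cases h : i = k - 1
    · rw [if_pos h]
      refine le_trans (Polynomial.natDegree_add_le _ _) ?_
      rw [Polynomial.natDegree_X_pow]
      exact max_le (by omega)
        (le_trans (Polynomial.natDegree_C_mul_le _ _) (le_of_eq (Polynomial.natDegree_X_pow _)))
    · rw [if_neg h, Polynomial.natDegree_X_pow]; omega
  have hfb_coeff : ∀ i, i < k → ∀ j, j < k → (fb i).coeff j = if j = i then 1 else 0 := by
    intro i hi j hj
    simp only [hfb]
    by_cases h : i = k - 1
    · subst h
      have hz : (C η * X ^ k : F[X]).coeff j = 0 := by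
        rw [Polynomial.coeff_C_mul, Polynomial.coeff_X_pow, if_neg (show ¬ j = k by omega),
          mul_zero]
      rw [if_pos rfl, Polynomial.coeff_add, hz, add_zero, Polynomial.coeff_X_pow]
    · rw [if_neg h, Polynomial.coeff_X_pow]
  have hfb_coeffk : ∀ i, i < k → (fb i).coeff k = if i = k - 1 then η else 0 := by
    intro i hi
    simp only [hfb]
    by_cases h : i = k - 1
    · rw [if_pos h, if_pos h, hc1]
    · rw [if_neg h, if_neg h, Polynomial.coeff_X_pow, if_neg (by omega)]
  have hfb_cond : ∀ i, i < k → (fb i).coeff k = η * (fb i).coeff (k - 1) := by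
    intro i hi
    rw [hfb_coeffk i hi]
    by_cases h : i = k - 1
    · rw [if_pos h]
      have : (fb i).coeff (k - 1) = 1 := by simp only [hfb]; rw [if_pos h, hc2]
      rw [this, mul_one]
    · rw [if_neg h]
      have : (fb i).coeff (k - 1) = 0 := by
        simp only [hfb]; rw [if_neg h, Polynomial.coeff_X_pow, if_neg (by omega)]
      rw [this, mul_zero]
  have hw_mem : ∀ i : Fin k, cw k (2 * k) α v (fb (i : ℕ)) ∈ ETGRS k (2 * k) α v η :=
    fun i => ⟨fb i, hfb_deg i i.isLt, hfb_cond i i.isLt, rfl⟩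
  have hrep : ∀ f : F[X], f.natDegree ≤ k → f.coeff k = η * f.coeff (k - 1) →
      f = ∑ i ∈ Finset.range k, C (f.coeff i) * fb i := by
    intro f h1 h2
    ext m
    rw [Polynomial.finset_sum_coeff]
    by_cases hm : m < k
    · rw [Finset.sum_eq_single m]
      · rw [Polynomial.coeff_C_mul, hfb_coeff m hm m hm, if_pos rfl, mul_one]
      · intro i hi hne
        rw [Polynomial.coeff_C_mul, hfb_coeff i (Finset.mem_range.mp hi) m hm,
          if_neg (fun hh => hne hh.symm), mul_zero]
      · intro h; exact absurd (Finset.mem_range.mpr hm) h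
    · by_cases hmk : m = k
      · rw [hmk, h2, Finset.sum_eq_single (k - 1)]
        · rw [Polynomial.coeff_C_mul, hfb_coeffk _ (by omega), if_pos rfl]; ring
        · intro i hi hne
          rw [Polynomial.coeff_C_mul, hfb_coeffk i (Finset.mem_range.mp hi), if_neg hne,
            mul_zero]
        · intro h; exact absurd (Finset.mem_range.mpr (by omega)) h
      · have hmgt : k < m := by omega
        rw [Polynomial.coeff_eq_zero_of_natDegree_lt (show f.natDegree < m by omega)]
        symm
        apply Finset.sum_eq_zero
        intro i hi
        rw [Polynomial.coeff_C_mul, Polynomial.coeff_eq_zero_of_natDegree_lt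
          (lt_of_le_of_lt (hfb_deg i (Finset.mem_range.mp hi)) hmgt), mul_zero]
  have hspan : Submodule.span F (ETGRS k (2 * k) α v η)
      = Submodule.span F (Set.range (fun i : Fin k => cw k (2 * k) α v (fb (i : ℕ)))) := by
    apply le_antisymm
    · rw [Submodule.span_le]
      rintro c ⟨f, h1, h2, rfl⟩
      have hcwf : (Fin.snoc (fun j => v j * f.eval (α j)) (f.coeff (k - 1)) : Fin (2*k+1) → F)
          = cw k (2 * k) α v f := rfl
      have hcs : cw k (2 * k) α v f
          = ∑ i ∈ Finset.range k, f.coeff i • cw k (2 * k) α v (fb i) := by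
        conv_lhs => rw [hrep f h1 h2]
        rw [cw_sum]
      rw [hcwf, hcs]
      apply Submodule.sum_mem
      intro i hi
      apply Submodule.smul_mem
      apply Submodule.subset_span
      exact ⟨(⟨i, Finset.mem_range.mp hi⟩ : Fin k), rfl⟩
    · rw [Submodule.span_le]
      rintro c ⟨i, rfl⟩
      exact Submodule.subset_span (hw_mem i)
  have hLI : LinearIndependent F (fun i : Fin k => cw k (2 * k) α v (fb (i : ℕ))) := by
    rw [Fintype.linearIndependent_iff]
    intro g hg
    have hcw : cw k (2 * k) α v (∑ i : Fin k, C (g i) * fb (i : ℕ)) = 0 := by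
      rw [cw_sum]
      exact hg
    have hPdeg : (∑ i : Fin k, C (g i) * fb (i : ℕ)).natDegree ≤ k :=
      Polynomial.natDegree_sum_le_of_forall_le _ _
        (fun i _ => le_trans (Polynomial.natDegree_C_mul_le _ _) (hfb_deg i i.isLt))
    have hProots : ∀ j : Fin (2 * k), (∑ i : Fin k, C (g i) * fb (i : ℕ)).eval (α j) = 0 := by
      intro j
      have := congrFun hcw (Fin.castSucc j)
      rw [cw_castSucc, Pi.zero_apply] at this
      exact (mul_eq_zero.mp this).resolve_left (hv j)
    have hP0 : (∑ i : Fin k, C (g i) * fb (i : ℕ)) = 0 :=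
      helper_eq_zero univ α hinj.injOn hPdeg
        (by rw [Finset.card_univ, Fintype.card_fin]; omega) (fun j _ => hProots j)
    intro i
    have hco : (∑ i : Fin k, C (g i) * fb (i : ℕ)).coeff (i : ℕ) = g i := by
      rw [Polynomial.finset_sum_coeff, Finset.sum_eq_single i]
      · rw [Polynomial.coeff_C_mul, hfb_coeff _ i.isLt _ i.isLt, if_pos rfl, mul_one]
      · intro l _ hne
        rw [Polynomial.coeff_C_mul, hfb_coeff _ l.isLt _ i.isLt,
          if_neg (fun hh => hne (Fin.ext hh.symm)), mul_zero]
      · intro h; exact absurd (Finset.mem_univ i) h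
    rw [hP0, Polynomial.coeff_zero] at hco
    exact hco.symm
  rw [hspan, finrank_span_eq_card hLI, Fintype.card_fin]

lemma dual_dim {N d : ℕ} (C : Set (Fin N → F))
    (hC : Module.finrank F (Submodule.span F C) = d) :
    codeDim (dualCode C) = N - d := by
  classical
  set B : LinearMap.BilinForm F (Fin N → F) :=
    LinearMap.mk₂ F (fun x y : Fin N → F => ∑ i, x i * y i)
      (fun m m' n => by simp only [Pi.add_apply, add_mul]; rw [Finset.sum_add_distrib])
      (fun c m n => by
        simp only [Pi.smul_apply, smul_eq_mul, Finset.mul_sum]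
        exact Finset.sum_congr rfl fun i _ => by ring)
      (fun m n n' => by simp only [Pi.add_apply, mul_add]; rw [Finset.sum_add_distrib])
      (fun c m n => by
        simp only [Pi.smul_apply, smul_eq_mul, Finset.mul_sum]
        exact Finset.sum_congr rfl fun i _ => by ring) with hB
  have happ : ∀ x y : Fin N → F, B x y = ∑ i, x i * y i := fun x y => rfl
  have hrefl : B.IsRefl := by
    intro x y h
    rw [happ] at h ⊢
    rw [Finset.sum_congr rfl (fun i _ => mul_comm (y i) (x i))]
    exact h
  have hnd : B.Nondegenerate := by
    refine (LinearMap.IsRefl.nondegenerate_iff_separatingLeft (B := B) hrefl).mpr ?_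
    intro x hx
    funext i
    have hxi := hx (Pi.single i 1)
    rw [happ, Finset.sum_eq_single i] at hxi
    · simpa using hxi
    · intro l _ hne
      rw [Pi.single_eq_of_ne hne, mul_zero]
    · intro h; exact absurd (Finset.mem_univ i) h
  have horth : dualCode C = ↑(B.orthogonal (Submodule.span F C)) := by
    ext x
    constructor
    · intro hx
      rw [SetLike.mem_coe, LinearMap.BilinForm.mem_orthogonal_iff]
      intro n hn
      induction hn using Submodule.span_induction with
      | mem y hy =>
        rw [happ,
          Finset.sum_congr rfl (fun i _ => mul_comm (y i) (x i))]
        exact hx y hy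
      | zero => simp [LinearMap.BilinForm.isOrtho_def]
      | add y z hy hz ihy ihz =>
        rw [map_add, LinearMap.add_apply, ihy, ihz, add_zero]
      | smul c y hy ih =>
        rw [map_smul, LinearMap.smul_apply, ih, smul_zero]
    · intro hx c hc
      rw [SetLike.mem_coe, LinearMap.BilinForm.mem_orthogonal_iff] at hx
      have h1 := hx c (Submodule.subset_span hc)
      rw [happ] at h1
      rw [Finset.sum_congr rfl (fun i _ => mul_comm (x i) (c i))]
      exact h1
  show Module.finrank F (Submodule.span F (dualCode C)) = N - d
  rw [horth, Submodule.span_eq, LinearMap.BilinForm.finrank_orthogonal hnd, hC]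
  congr 1
  rw [Module.finrank_pi]
  exact Fintype.card_fin N

end mainlemmas

noncomputable section mainlemmas2
open Finset
set_option linter.unusedSectionVars false
variable {F : Type*} [Field F]

lemma hammingNorm_eq_card {n : ℕ} [DecidableEq F] (y : Fin n → F) :
    hammingNorm y = (univ.filter fun i => y i ≠ 0).card := rfl

lemma etgrs_selfOrth {k : ℕ} {α v : Fin (2 * k) → F} {η : F} (hk : 3 ≤ k) (hη : η ≠ 0)
    (h2F : (2 : F) ≠ 0) (hinj : Function.Injective α) (hsum : ∑ j, α j = 0)
    (hv2 : ∀ j, v j ^ 2 = -(2 * η)⁻¹ * (∏ i ∈ Finset.univ.erase j, (α j - α i))⁻¹) :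
    selfOrthogonal (ETGRS k (2 * k) α v η) := by
  classical
  intro c1 hc1
  obtain ⟨f, hf1, hf2, rfl⟩ := hc1
  intro c2 hc2
  obtain ⟨g, hg1, hg2, rfl⟩ := hc2
  have hcwf : (Fin.snoc (fun j => v j * f.eval (α j)) (f.coeff (k - 1)) : Fin (2*k+1) → F)
      = cw k (2 * k) α v f := rfl
  have hcwg : (Fin.snoc (fun j => v j * g.eval (α j)) (g.coeff (k - 1)) : Fin (2*k+1) → F)
      = cw k (2 * k) α v g := rfl
  rw [hcwf, hcwg, Fin.sum_univ_castSucc]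
  simp only [cw_castSucc, cw_last]
  have hterm : ∀ j : Fin (2 * k), v j * f.eval (α j) * (v j * g.eval (α j))
      = -(2 * η)⁻¹ * ((∏ i ∈ Finset.univ.erase j, (α j - α i))⁻¹ * (f * g).eval (α j)) := by
    intro j
    rw [Polynomial.eval_mul]
    have h := hv2 j
    calc v j * f.eval (α j) * (v j * g.eval (α j))
        = v j ^ 2 * (f.eval (α j) * g.eval (α j)) := by ring
      _ = _ := by rw [h]; ring
  rw [Finset.sum_congr rfl (fun j _ => hterm j), ← Finset.mul_sum]
  have hcard : (univ : Finset (Fin (2 * k))).card = 2 * k := by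
    rw [Finset.card_univ, Fintype.card_fin]
  have hlag := lag2 (univ : Finset (Fin (2 * k))) α hinj.injOn
    ⟨⟨0, by omega⟩, Finset.mem_univ _⟩ (f := f * g)
    (by rw [hcard]; exact le_trans Polynomial.natDegree_mul_le (by omega))
  rw [hcard] at hlag
  rw [hlag, hsum, mul_zero, add_zero, twist_mul_coeff hk hf1 hf2 hg1 hg2]
  have h2η : (2 : F) * η ≠ 0 := mul_ne_zero h2F hη
  field_simp
  ring

lemma etgrs_wt_ge {k : ℕ} [DecidableEq F] {α v : Fin (2 * k) → F} {η : F} (hk : 3 ≤ k)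
    (hη : η ≠ 0) (hv : ∀ j, v j ≠ 0) (hinj : Function.Injective α) {f : F[X]}
    (hf1 : f.natDegree ≤ k) (hf2 : f.coeff k = η * f.coeff (k - 1)) (hf0 : f ≠ 0) :
    k + 1 ≤ hammingNorm (cw k (2 * k) α v f) := by
  rw [wt_cw hv]
  by_cases ha : f.coeff (k - 1) = 0
  · have hdeg : f.natDegree ≤ k - 2 := by
      rw [Polynomial.natDegree_le_iff_coeff_eq_zero]
      intro mm hmm
      by_cases h1 : mm = k - 1
      · rw [h1]; exact ha
      · by_cases h2 : mm = k
        · rw [h2, hf2, ha, mul_zero]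
        · exact Polynomial.coeff_eq_zero_of_natDegree_lt (by omega)
    have hz := zset_card_le hinj hf0 hdeg
    rw [if_neg (not_not.mpr ha)]
    omega
  · have hz := zset_card_le hinj hf0 hf1
    rw [if_pos ha]
    omega

lemma etgrs_wt_k1_subset {k : ℕ} [DecidableEq F] {α v : Fin (2 * k) → F} {η : F} (hk : 3 ≤ k)
    (hη : η ≠ 0) (hv : ∀ j, v j ≠ 0) (hinj : Function.Injective α) {f : F[X]}
    (hf1 : f.natDegree ≤ k) (hf2 : f.coeff k = η * f.coeff (k - 1)) (hf0 : f ≠ 0)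
    (hwt : hammingNorm (cw k (2 * k) α v f) = k + 1) :
    ∃ A : Finset F, ↑A ⊆ Set.range α ∧ A.card = k ∧ ∑ x ∈ A, x = -η⁻¹ := by
  rw [wt_cw hv] at hwt
  by_cases ha : f.coeff (k - 1) = 0
  · exfalso
    have hdeg : f.natDegree ≤ k - 2 := by
      rw [Polynomial.natDegree_le_iff_coeff_eq_zero]
      intro mm hmm
      by_cases h1 : mm = k - 1
      · rw [h1]; exact ha
      · by_cases h2 : mm = k
        · rw [h2, hf2, ha, mul_zero]
        · exact Polynomial.coeff_eq_zero_of_natDegree_lt (by omega)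
    have hz := zset_card_le hinj hf0 hdeg
    rw [if_neg (not_not.mpr ha)] at hwt
    omega
  · rw [if_pos ha] at hwt
    have hz := zset_card_le hinj hf0 hf1
    have hZk : (univ.filter fun j : Fin (2 * k) => f.eval (α j) = 0).card = k := by omega
    set Z := univ.filter fun j : Fin (2 * k) => f.eval (α j) = 0 with hZdef
    have hfk : f.coeff k ≠ 0 := by rw [hf2]; exact mul_ne_zero hη ha
    have hnod_deg : (Lagrange.nodal Z α).natDegree = k := by
      rw [Lagrange.natDegree_nodal, hZk]
    have hnod_top : (Lagrange.nodal Z α).coeff k = 1 :=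
      (congrArg (Lagrange.nodal Z α).coeff hnod_deg.symm).trans
        Lagrange.nodal_monic.coeff_natDegree
    have hD0 : f - C (f.coeff k) * Lagrange.nodal Z α = 0 := by
      refine helper_eq_zero Z α hinj.injOn (d := k - 1) ?_ (by omega) ?_
      · rw [Polynomial.natDegree_le_iff_coeff_eq_zero]
        intro mm hmm
        rw [Polynomial.coeff_sub, Polynomial.coeff_C_mul]
        by_cases h1 : mm = k
        · rw [h1, hnod_top, mul_one, sub_self]
        · have hnodlt : (Lagrange.nodal Z α).natDegree < mm := by rw [hnod_deg]; omega
          rw [Polynomial.coeff_eq_zero_of_natDegree_lt (show f.natDegree < mm by omega),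
            Polynomial.coeff_eq_zero_of_natDegree_lt hnodlt, mul_zero, sub_self]
      · intro j hj
        rw [Polynomial.eval_sub, Polynomial.eval_mul, Lagrange.eval_nodal_at_node hj,
          mul_zero, sub_zero]
        exact (Finset.mem_filter.mp hj).2
    have hfeq : f = C (f.coeff k) * Lagrange.nodal Z α := sub_eq_zero.mp hD0
    have hck : f.coeff (k - 1) = f.coeff k * (-∑ j ∈ Z, α j) := by
      conv_lhs => rw [hfeq]
      rw [Polynomial.coeff_C_mul]
      congr 1
      rw [Lagrange.nodal_eq]
      have hh := Polynomial.prod_X_sub_C_coeff_card_pred Z α (by rw [hZk]; omega)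
      rw [hZk] at hh
      exact hh
    have hsumZ : ∑ j ∈ Z, α j = -η⁻¹ := by
      rw [hf2] at hck
      have h4 : η * (∑ j ∈ Z, α j) = -1 := by
        have h3 : f.coeff (k - 1) * (1 + η * ∑ j ∈ Z, α j) = 0 := by
          linear_combination hck
        rcases mul_eq_zero.mp h3 with h | h
        · exact absurd h ha
        · linear_combination h
      apply mul_left_cancel₀ hη
      rw [h4]
      field_simp
    refine ⟨Z.image α, ?_, ?_, ?_⟩
    · intro x hx
      obtain ⟨j, _, rfl⟩ := Finset.mem_image.mp hx
      exact Set.mem_range_self j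
    · rw [Finset.card_image_of_injOn hinj.injOn, hZk]
    · rw [Finset.sum_image (fun a _ b _ h => hinj h)]
      exact hsumZ

lemma etgrs_wit_k2 {k : ℕ} [DecidableEq F] {α v : Fin (2 * k) → F} {η : F} (hk : 3 ≤ k)
    (hη : η ≠ 0) (hv : ∀ j, v j ≠ 0) (hinj : Function.Injective α) :
    ∃ c ∈ ETGRS k (2 * k) α v η, c ≠ 0 ∧ hammingNorm c = k + 2 := by
  obtain ⟨T0, -, hT0card⟩ := Finset.exists_subset_card_eq (s := (univ : Finset (Fin (2 * k)))) (n := k - 2)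
    (by rw [Finset.card_univ, Fintype.card_fin]; omega)
  have hdeg : (Lagrange.nodal T0 α).natDegree = k - 2 := by
    rw [Lagrange.natDegree_nodal, hT0card]
  have hcm1 : (Lagrange.nodal T0 α).coeff (k - 1) = 0 :=
    Polynomial.coeff_eq_zero_of_natDegree_lt (by omega)
  have hck : (Lagrange.nodal T0 α).coeff k = 0 :=
    Polynomial.coeff_eq_zero_of_natDegree_lt (by omega)
  have hZ : (univ.filter fun j : Fin (2 * k) => (Lagrange.nodal T0 α).eval (α j) = 0) = T0 := by
    ext j
    simp only [Finset.mem_filter, Finset.mem_univ, true_and]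
    rw [Lagrange.eval_nodal]
    constructor
    · intro h
      obtain ⟨i, hi, hzero⟩ := Finset.prod_eq_zero_iff.mp h
      have h2 : α j = α i := by rwa [sub_eq_zero] at hzero
      rwa [hinj h2]
    · intro hj
      exact Finset.prod_eq_zero hj (by rw [sub_self])
  have hwt : hammingNorm (cw k (2 * k) α v (Lagrange.nodal T0 α)) = k + 2 := by
    rw [wt_cw hv, hZ, hT0card, if_neg (not_not.mpr hcm1)]
    omega
  refine ⟨cw k (2 * k) α v (Lagrange.nodal T0 α),
    ⟨Lagrange.nodal T0 α, by omega, by rw [hck, hcm1, mul_zero], rfl⟩, ?_, hwt⟩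
  intro h0
  rw [h0, hammingNorm_zero] at hwt
  omega

lemma etgrs_wit_k1 {k : ℕ} [DecidableEq F] {α v : Fin (2 * k) → F} {η : F} (hk : 3 ≤ k)
    (hη : η ≠ 0) (hv : ∀ j, v j ≠ 0) (hinj : Function.Injective α)
    (A : Finset F) (hA1 : ↑A ⊆ Set.range α) (hA2 : A.card = k) (hA3 : ∑ x ∈ A, x = -η⁻¹) :
    ∃ c ∈ ETGRS k (2 * k) α v η, c ≠ 0 ∧ hammingNorm c = k + 1 := by
  classical
  set S := univ.filter (fun j : Fin (2 * k) => α j ∈ A) with hS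
  have hAS : A = S.image α := by
    ext x
    constructor
    · intro hxA
      obtain ⟨j, rfl⟩ := hA1 hxA
      exact Finset.mem_image.mpr ⟨j, Finset.mem_filter.mpr ⟨Finset.mem_univ _, hxA⟩, rfl⟩
    · intro hx
      obtain ⟨j, hj, rfl⟩ := Finset.mem_image.mp hx
      exact (Finset.mem_filter.mp hj).2
  have hScard : S.card = k := by
    rw [hAS, Finset.card_image_of_injOn hinj.injOn] at hA2
    exact hA2
  have hsumS : ∑ j ∈ S, α j = -η⁻¹ := by
    rw [hAS, Finset.sum_image (fun a _ b _ h => hinj h)] at hA3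
    exact hA3
  have hdeg : (Lagrange.nodal S α).natDegree = k := by rw [Lagrange.natDegree_nodal, hScard]
  have htop : (Lagrange.nodal S α).coeff k = 1 :=
    (congrArg (Lagrange.nodal S α).coeff hdeg.symm).trans
      Lagrange.nodal_monic.coeff_natDegree
  have hcm1 : (Lagrange.nodal S α).coeff (k - 1) = η⁻¹ := by
    rw [Lagrange.nodal_eq]
    have hh := Polynomial.prod_X_sub_C_coeff_card_pred S α (by rw [hScard]; omega)
    rw [hScard] at hh
    rw [hh, hsumS, neg_neg]
  have hZ : (univ.filter fun j : Fin (2 * k) => (Lagrange.nodal S α).eval (α j) = 0) = S := by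
    ext j
    simp only [Finset.mem_filter, Finset.mem_univ, true_and]
    rw [Lagrange.eval_nodal]
    constructor
    · intro h
      obtain ⟨i, hi, hzero⟩ := Finset.prod_eq_zero_iff.mp h
      have h2 : α j = α i := by rwa [sub_eq_zero] at hzero
      rwa [hinj h2]
    · intro hj
      exact Finset.prod_eq_zero hj (by rw [sub_self])
  have hwt : hammingNorm (cw k (2 * k) α v (Lagrange.nodal S α)) = k + 1 := by
    rw [wt_cw hv, hZ, hScard, if_pos (by rw [hcm1]; exact inv_ne_zero hη)]
    omega
  refine ⟨cw k (2 * k) α v (Lagrange.nodal S α),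
    ⟨Lagrange.nodal S α, le_of_eq hdeg, by rw [htop, hcm1, mul_inv_cancel₀ hη], rfl⟩, ?_, hwt⟩
  intro h0
  rw [h0, hammingNorm_zero] at hwt
  omega

lemma etgrs_dual_low {k : ℕ} [DecidableEq F] {α v : Fin (2 * k) → F} {η : F} (hk : 3 ≤ k)
    (hη : η ≠ 0) (hv : ∀ j, v j ≠ 0) (hinj : Function.Injective α) :
    ∀ x ∈ dualCode (ETGRS k (2 * k) α v η), x ≠ 0 → k ≤ hammingNorm x := by
  classical
  intro x hx hxne
  by_contra hlt
  push_neg at hlt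
  have hc2' : (X ^ (k - 1) + C η * X ^ k : F[X]).coeff (k - 1) = 1 := by
    rw [Polynomial.coeff_add, Polynomial.coeff_X_pow, Polynomial.coeff_C_mul,
      Polynomial.coeff_X_pow, if_pos rfl, if_neg (by omega)]
    ring
  have hc1' : (X ^ (k - 1) + C η * X ^ k : F[X]).coeff k = η := by
    rw [Polynomial.coeff_add, Polynomial.coeff_X_pow, Polynomial.coeff_C_mul,
      Polynomial.coeff_X_pow, if_neg (by omega), if_pos rfl]
    ring
  have hnorm : hammingNorm x = hammingNorm (Fin.init x)
      + (if x (Fin.last (2 * k)) ≠ 0 then 1 else 0) := by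
    conv_lhs => rw [← Fin.snoc_init_self x]
    rw [hn_snoc]
  have hfront : (univ.filter fun j : Fin (2 * k) => Fin.init x j ≠ 0).card ≤ k - 1 := by
    have h1 : hammingNorm (Fin.init x) ≤ k - 1 := by
      by_cases hl : x (Fin.last (2 * k)) ≠ 0
      · rw [if_pos hl] at hnorm; omega
      · rw [if_neg hl] at hnorm; omega
    rw [hammingNorm_eq_card] at h1
    exact h1
  have hcond : ∀ i : ℕ, i < k - 1 →
      ∑ j ∈ (univ.filter fun j : Fin (2 * k) => Fin.init x j ≠ 0),
        (Fin.init x j * v j) * α j ^ i = 0 := by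
    intro i hi
    have hmem : cw k (2 * k) α v (X ^ i) ∈ ETGRS k (2 * k) α v η := by
      refine ⟨X ^ i, by rw [Polynomial.natDegree_X_pow]; omega, ?_, rfl⟩
      rw [Polynomial.coeff_X_pow, Polynomial.coeff_X_pow, if_neg (by omega),
        if_neg (by omega), mul_zero]
    have h0 := hx _ hmem
    rw [Fin.sum_univ_castSucc] at h0
    have hlast : x (Fin.last (2 * k)) * cw k (2 * k) α v (X ^ i) (Fin.last (2 * k)) = 0 := by
      rw [cw_last, Polynomial.coeff_X_pow, if_neg (by omega), mul_zero]
    rw [hlast, add_zero] at h0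
    have hterm : ∀ j : Fin (2 * k),
        x (Fin.castSucc j) * cw k (2 * k) α v (X ^ i) (Fin.castSucc j)
          = (Fin.init x j * v j) * α j ^ i := by
      intro j
      rw [cw_castSucc, Polynomial.eval_pow, Polynomial.eval_X,
        show Fin.init x j = x (Fin.castSucc j) from rfl]
      ring
    rw [Finset.sum_congr rfl (fun j _ => hterm j)] at h0
    have hzero : ∀ j ∈ (univ : Finset (Fin (2 * k))),
        j ∉ (univ.filter fun j : Fin (2 * k) => Fin.init x j ≠ 0) →
        (Fin.init x j * v j) * α j ^ i = 0 := by
      intro j _ hj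
      have hj0 : Fin.init x j = 0 := by
        by_contra hne
        exact hj (Finset.mem_filter.mpr ⟨Finset.mem_univ _, hne⟩)
      rw [hj0, zero_mul, zero_mul]
    rw [← Finset.sum_subset (Finset.filter_subset _ _) hzero] at h0
    exact h0
  have hvand := vand _ α hinj.injOn (fun j => Fin.init x j * v j)
    (t := k - 1) hfront (fun i hi => hcond i hi)
  have hinit0 : ∀ j : Fin (2 * k), Fin.init x j = 0 := by
    intro j
    by_cases hj : Fin.init x j ≠ 0
    · have hh := hvand j (Finset.mem_filter.mpr ⟨Finset.mem_univ _, hj⟩)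
      rcases mul_eq_zero.mp hh with h | h
      · exact h
      · exact absurd h (hv j)
    · exact not_not.mp hj
  have hfs_mem : cw k (2 * k) α v (X ^ (k - 1) + C η * X ^ k) ∈ ETGRS k (2 * k) α v η := by
    refine ⟨_, ?_, ?_, rfl⟩
    · refine le_trans (Polynomial.natDegree_add_le _ _) ?_
      rw [Polynomial.natDegree_X_pow]
      exact max_le (by omega)
        (le_trans (Polynomial.natDegree_C_mul_le _ _) (le_of_eq (Polynomial.natDegree_X_pow _)))
    · rw [hc1', hc2', mul_one]
  have h0 := hx _ hfs_mem
  rw [Fin.sum_univ_castSucc] at h0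
  have hfront0 : ∀ j : Fin (2 * k),
      x (Fin.castSucc j) * cw k (2 * k) α v (X ^ (k - 1) + C η * X ^ k) (Fin.castSucc j) = 0 := by
    intro j
    rw [show x (Fin.castSucc j) = Fin.init x j from rfl, hinit0 j, zero_mul]
  rw [Finset.sum_congr rfl (fun j _ => hfront0 j), Finset.sum_const_zero, zero_add,
    cw_last, hc2', mul_one] at h0
  apply hxne
  funext y
  refine Fin.lastCases ?_ (fun j => ?_) y
  · exact h0
  · exact hinit0 j

lemma etgrs_dual_wit {k : ℕ} [DecidableEq F] {α v : Fin (2 * k) → F} {η : F} (hk : 3 ≤ k)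
    (hη : η ≠ 0) (hv : ∀ j, v j ≠ 0) (hinj : Function.Injective α)
    (A : Finset F) (hA1 : ↑A ⊆ Set.range α) (hA2 : A.card = k) (hA3 : ∑ x ∈ A, x = -η⁻¹) :
    ∃ x ∈ dualCode (ETGRS k (2 * k) α v η), x ≠ 0 ∧ hammingNorm x = k := by
  classical
  set S := univ.filter (fun j : Fin (2 * k) => α j ∈ A) with hS
  have hAS : A = S.image α := by
    ext x
    constructor
    · intro hxA
      obtain ⟨j, rfl⟩ := hA1 hxA
      exact Finset.mem_image.mpr ⟨j, Finset.mem_filter.mpr ⟨Finset.mem_univ _, hxA⟩, rfl⟩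
    · intro hx
      obtain ⟨j, hj, rfl⟩ := Finset.mem_image.mp hx
      exact (Finset.mem_filter.mp hj).2
  have hScard : S.card = k := by
    rw [hAS, Finset.card_image_of_injOn hinj.injOn] at hA2
    exact hA2
  have hSne : S.Nonempty := Finset.card_pos.mp (by rw [hScard]; omega)
  have hsumS : ∑ j ∈ S, α j = -η⁻¹ := by
    rw [hAS, Finset.sum_image (fun a _ b _ h => hinj h)] at hA3
    exact hA3
  have hprodne : ∀ j ∈ S, (∏ i ∈ S.erase j, (α j - α i)) ≠ 0 := by
    intro j hj
    apply Finset.prod_ne_zero_iff.mpr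
    intro i hi
    rcases Finset.mem_erase.mp hi with ⟨hne, _⟩
    rw [sub_ne_zero]
    exact fun h => hne (hinj h.symm)
  set x0 : Fin (2 * k + 1) → F := Fin.snoc
    (fun j => if j ∈ S then (v j)⁻¹ * (∏ i ∈ S.erase j, (α j - α i))⁻¹ else 0) 0 with hx0
  have hx0front : ∀ j : Fin (2 * k), x0 (Fin.castSucc j)
      = if j ∈ S then (v j)⁻¹ * (∏ i ∈ S.erase j, (α j - α i))⁻¹ else 0 := by
    intro j
    rw [hx0, Fin.snoc_castSucc]
  have hx0last : x0 (Fin.last (2 * k)) = 0 := by rw [hx0, Fin.snoc_last]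
  have hwt : hammingNorm x0 = k := by
    rw [hx0, hn_snoc, if_neg (by simp)]
    have hfilter : (univ.filter fun j : Fin (2 * k) =>
        (if j ∈ S then (v j)⁻¹ * (∏ i ∈ S.erase j, (α j - α i))⁻¹ else 0) ≠ 0) = S := by
      ext j
      simp only [Finset.mem_filter, Finset.mem_univ, true_and]
      by_cases hj : j ∈ S
      · rw [if_pos hj]
        exact ⟨fun _ => hj,
          fun _ => mul_ne_zero (inv_ne_zero (hv j)) (inv_ne_zero (hprodne j hj))⟩
      · rw [if_neg hj]
        simp [hj]
    rw [hammingNorm_eq_card, hfilter, hScard, add_zero]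
  refine ⟨x0, ?_, ?_, hwt⟩
  · intro c hc
    obtain ⟨f, hf1, hf2, rfl⟩ := hc
    have hcwf : (Fin.snoc (fun j => v j * f.eval (α j)) (f.coeff (k - 1)) : Fin (2*k+1) → F)
        = cw k (2 * k) α v f := rfl
    rw [hcwf, Fin.sum_univ_castSucc, hx0last, zero_mul, add_zero]
    have hterm : ∀ j : Fin (2 * k), x0 (Fin.castSucc j) * cw k (2 * k) α v f (Fin.castSucc j)
        = if j ∈ S then (∏ i ∈ S.erase j, (α j - α i))⁻¹ * f.eval (α j) else 0 := by
      intro j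
      rw [hx0front, cw_castSucc]
      by_cases hj : j ∈ S
      · rw [if_pos hj, if_pos hj]
        calc (v j)⁻¹ * (∏ i ∈ S.erase j, (α j - α i))⁻¹ * (v j * f.eval (α j))
            = ((v j)⁻¹ * v j) * ((∏ i ∈ S.erase j, (α j - α i))⁻¹ * f.eval (α j)) := by ring
          _ = (∏ i ∈ S.erase j, (α j - α i))⁻¹ * f.eval (α j) := by
              rw [inv_mul_cancel₀ (hv j), one_mul]
      · rw [if_neg hj, if_neg hj, zero_mul]
    rw [Finset.sum_congr rfl (fun j _ => hterm j), Finset.sum_ite_mem, Finset.univ_inter]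
    have hlag := lag2 S α hinj.injOn hSne (f := f) (by rw [hScard]; exact hf1)
    rw [hScard] at hlag
    rw [hlag, hsumS, hf2]
    have hrw : η * f.coeff (k - 1) * -η⁻¹ = -f.coeff (k - 1) := by field_simp
    rw [hrw]
    ring
  · intro h0
    rw [h0, hammingNorm_zero] at hwt
    omega

end mainlemmas2

/-- construction of almost self-dual MDS / NMDS (+)-ETGRS codes over
`F_{p^{2m}}` from a generator of `F_{p^m}^*`. -/
theorem stmt18 {p m : ℕ} (hp : p.Prime) (hpodd : Odd p) (hm : 0 < m)
    {F : Type*} [Field F] [Fintype F] [DecidableEq F]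
    (hF : Fintype.card F = p ^ (2 * m))
    (γ : F) (hγ0 : γ ≠ 0) (hγsub : γ ^ (p ^ m) = γ) (hγord : orderOf γ = p ^ m - 1)
    {k : ℕ} (hk : 3 ≤ k) (hk2 : 2 * k ≤ p ^ m - 1)
    (α : Fin (2 * k) → F)
    (hα : ∀ j : Fin (2 * k), α j =
      if (j : ℕ) < k then γ ^ ((j : ℕ) + 1) else -γ ^ ((j : ℕ) - k + 1))
    (η : F) (hη : η ≠ 0) :
    Function.Injective α ∧
    ∀ v : Fin (2 * k) → F, (∀ j, v j ≠ 0) →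
      (∀ j, v j ^ 2 = -(2 * η)⁻¹ * (∏ i ∈ Finset.univ.erase j, (α j - α i))⁻¹) →
      almostSelfDual (ETGRS k (2 * k) α v η) ∧
      (η ^ (p ^ m) ≠ η → isMDS (ETGRS k (2 * k) α v η)) ∧
      (0 < Nsub k (-η⁻¹) (Set.range α) → isNMDS (ETGRS k (2 * k) α v η))  := by
  haveI hcharP : CharP F p := charp_of_card hp hm hF
  have h2F : (2 : F) ≠ 0 := two_ne_zero_of_charp hp hpodd
  have hk1 : 1 ≤ k := by omega
  have hinj : Function.Injective α := alpha_injective hγ0 hγord h2F hk1 hk2 α hα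
  have hsumα : ∑ j, α j = 0 := by
    have hA : ∑ j : Fin (2 * k), α j
        = ∑ j : Fin (2 * k),
          (fun i : ℕ => if i < k then γ ^ (i + 1) else -γ ^ (i - k + 1)) (j : ℕ) :=
      Finset.sum_congr rfl fun j _ => hα j
    have hB := Fin.sum_univ_eq_sum_range
      (fun i : ℕ => if i < k then γ ^ (i + 1) else -γ ^ (i - k + 1)) (2 * k)
    rw [hA, hB]
    rw [Finset.range_eq_Ico,
      ← Finset.sum_Ico_consecutive _ (Nat.zero_le k) (show k ≤ 2 * k by omega)]
    rw [Finset.sum_Ico_eq_sum_range, Finset.sum_Ico_eq_sum_range]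
    simp only [Nat.sub_zero]
    rw [show 2 * k - k = k from by omega, ← Finset.sum_add_distrib]
    refine Finset.sum_eq_zero fun i hi => ?_
    rw [Finset.mem_range] at hi
    show (if 0 + i < k then γ ^ (0 + i + 1) else -γ ^ (0 + i - k + 1))
        + (if k + i < k then γ ^ (k + i + 1) else -γ ^ (k + i - k + 1)) = 0
    rw [if_pos (by omega), if_neg (by omega), Nat.zero_add,
      show k + i - k + 1 = i + 1 from by omega]
    ring
  have hfixα : ∀ z ∈ Set.range α, z ^ p ^ m = z := by
    rintro z ⟨j, rfl⟩
    rw [hα j]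
    have hfixpow : ∀ e : ℕ, (γ ^ e) ^ p ^ m = γ ^ e := by
      intro e
      rw [← pow_mul, mul_comm, pow_mul, hγsub]
    by_cases hj : (j : ℕ) < k
    · rw [if_pos hj]; exact hfixpow _
    · rw [if_neg hj, Odd.neg_pow hpodd.pow, hfixpow _]
  have hNoA : η ^ p ^ m ≠ η → ∀ A : Finset F,
      ¬(↑A ⊆ Set.range α ∧ A.card = k ∧ ∑ x ∈ A, x = -η⁻¹) := by
    rintro hηf A ⟨hA1, hA2, hA3⟩
    have hfixA : (∑ x ∈ A, x) ^ p ^ m = ∑ x ∈ A, x :=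
      sum_fixed hp A (fun x hx => hfixα x (hA1 hx))
    rw [hA3, Odd.neg_pow hpodd.pow, inv_pow, neg_inj] at hfixA
    exact hηf (inv_injective hfixA)
  refine ⟨hinj, ?_⟩
  intro v hv hv2
  have hselforth := etgrs_selfOrth hk hη h2F hinj hsumα hv2
  have hdimC : codeDim (ETGRS k (2 * k) α v η) = k := etgrs_dim hk hv hinj
  have hdualdim : codeDim (dualCode (ETGRS k (2 * k) α v η)) = k + 1 := by
    have hd := dual_dim (ETGRS k (2 * k) α v η) (d := k) (etgrs_dim hk hv hinj)
    omega
  have hf0_of : ∀ f : F[X],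
      (Fin.snoc (fun j => v j * f.eval (α j)) (f.coeff (k - 1)) : Fin (2*k+1) → F) ≠ 0 →
      f ≠ 0 := by
    intro f hcne h
    apply hcne
    rw [h]
    exact cw_zero
  have hlow : ∀ w' ∈ {w | ∃ c ∈ ETGRS k (2 * k) α v η, c ≠ 0 ∧ hammingNorm c = w},
      k + 1 ≤ w' := by
    rintro w' ⟨c, hc, hcne, rfl⟩
    obtain ⟨f, hf1, hf2, rfl⟩ := hc
    exact etgrs_wt_ge hk hη hv hinj hf1 hf2 (hf0_of f hcne)
  have hlow2 : (∀ A : Finset F, ¬(↑A ⊆ Set.range α ∧ A.card = k ∧ ∑ x ∈ A, x = -η⁻¹)) →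
      ∀ w' ∈ {w | ∃ c ∈ ETGRS k (2 * k) α v η, c ≠ 0 ∧ hammingNorm c = w},
        k + 2 ≤ w' := by
    intro hANo w' hw'
    obtain ⟨c, hc, hcne, rfl⟩ := hw'
    obtain ⟨f, hf1, hf2, rfl⟩ := hc
    have hf0 := hf0_of f hcne
    have hge := etgrs_wt_ge hk hη hv hinj hf1 hf2 hf0
    rcases eq_or_lt_of_le hge with heq | hlt
    · exfalso
      obtain ⟨A, hA1, hA2, hA3⟩ :=
        etgrs_wt_k1_subset hk hη hv hinj hf1 hf2 hf0 heq.symm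
      exact hANo A ⟨hA1, hA2, hA3⟩
    · exact hlt
  obtain ⟨c2, hc2mem, hc2ne, hc2wt⟩ := etgrs_wit_k2 (α := α) (v := v) (η := η) hk hη hv hinj
  have hmem2 : (k + 2) ∈ {w | ∃ c ∈ ETGRS k (2 * k) α v η, c ≠ 0 ∧ hammingNorm c = w} :=
    ⟨c2, hc2mem, hc2ne, hc2wt⟩
  refine ⟨⟨hselforth, ⟨k, by ring⟩, ?_⟩, ?_, ?_⟩
  · rw [hdimC]
    omega
  · intro hηf
    have hminwt : minWt (ETGRS k (2 * k) α v η) = k + 2 :=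
      le_antisymm (Nat.sInf_le hmem2) (le_csInf ⟨_, hmem2⟩ (hlow2 (hNoA hηf)))
    show minWt (ETGRS k (2 * k) α v η) = 2 * k + 1 - codeDim (ETGRS k (2 * k) α v η) + 1
    rw [hminwt, hdimC]
    omega
  · intro hpos
    have hAex : {A : Finset F | ↑A ⊆ Set.range α ∧ A.card = k ∧ ∑ x ∈ A, x = -η⁻¹}.Nonempty :=
      Set.nonempty_of_ncard_ne_zero hpos.ne'
    obtain ⟨A, hA1, hA2, hA3⟩ := hAex
    obtain ⟨c1, hc1mem, hc1ne, hc1wt⟩ := etgrs_wit_k1 hk hη hv hinj A hA1 hA2 hA3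
    have hminwt : minWt (ETGRS k (2 * k) α v η) = k + 1 :=
      le_antisymm (Nat.sInf_le ⟨c1, hc1mem, hc1ne, hc1wt⟩) (le_csInf ⟨_, hmem2⟩ hlow)
    obtain ⟨x0, hx0mem, hx0ne, hx0wt⟩ := etgrs_dual_wit hk hη hv hinj A hA1 hA2 hA3
    have hdlow := etgrs_dual_low (η := η) hk hη hv hinj
    have hminwtd : minWt (dualCode (ETGRS k (2 * k) α v η)) = k :=
      le_antisymm (Nat.sInf_le ⟨x0, hx0mem, hx0ne, hx0wt⟩)
        (le_csInf ⟨_, ⟨x0, hx0mem, hx0ne, hx0wt⟩⟩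
          (by rintro w ⟨x, hxm, hxne, rfl⟩; exact hdlow x hxm hxne))
    constructor
    · show minWt (ETGRS k (2 * k) α v η) = 2 * k + 1 - codeDim (ETGRS k (2 * k) α v η)
      rw [hminwt, hdimC]
      omega
    · show minWt (dualCode (ETGRS k (2 * k) α v η))
          = 2 * k + 1 - codeDim (dualCode (ETGRS k (2 * k) α v η))
      rw [hminwtd, hdualdim]
      omega
end

section
/- Let p be an odd prime and let r, m be positive integers with r dividing m and m/r even. Let q = p^m, let Tr : F_{p^m} → F_{p^r} be the trace map Tr(x) = x + x^{p^r} + x^{p^{2r}} + … + x^{p^{m−r}}, and let Ker(Tr) = {x ∈ F_{p^m} : Tr(x) = 0}. Set n = p^m − p^{m−r} and k = n/2, let α = (α_1,…,α_n) be an ordering of the elements of F_{p^m}∖Ker(Tr), and let η ∈ F_q^*. Then for every v = (v_1,…,v_n) ∈ (F_q^*)^n satisfying v_j² = (2η)^{−1}·Tr(α_j) for all j = 1,…,n, the (+)-ETGRS code C_{k,n}(α,v,η,∞) is almost self-dual. -/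
open Polynomial

lemma aux_sum_pow {K : Type*} [Field K] [Fintype K] (hq : 3 ≤ Fintype.card K)
    {e : ℕ} (he : 0 < e) (he2 : e ≤ Fintype.card K) :
    ∑ x : K, x ^ e = if e = Fintype.card K - 1 then (-1 : K) else 0 := by
  classical
  rcases lt_trichotomy e (Fintype.card K - 1) with h | h | h
  · rw [if_neg h.ne, FiniteField.sum_pow_lt_card_sub_one K e h]
  · rw [if_pos h]
    rw [← Finset.sum_subset (Finset.subset_univ (Finset.univ \ {0}))
      (by intro x _ hx; simp at hx; simp [hx, zero_pow he.ne'])]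
    have : ∀ x ∈ Finset.univ \ ({0} : Finset K), x ^ e = 1 := by
      intro x hx
      simp only [Finset.mem_sdiff, Finset.mem_singleton] at hx
      rw [h]; exact FiniteField.pow_card_sub_one_eq_one x hx.2
    rw [Finset.sum_congr rfl this, Finset.sum_const, nsmul_eq_mul, mul_one,
      Finset.card_sdiff_of_subset (Finset.subset_univ _), Finset.card_singleton, Finset.card_univ,
      Nat.cast_sub (by omega), FiniteField.cast_card_eq_zero K, Nat.cast_one, zero_sub]
  · have heq : e = Fintype.card K := by omega
    subst heq
    rw [if_neg (by omega)]
    have : ∀ x : K, x ^ Fintype.card K = x ^ 1 := by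
      intro x; rw [pow_one, FiniteField.pow_card]
    rw [Finset.sum_congr rfl (fun x _ => this x)]
    exact FiniteField.sum_pow_lt_card_sub_one K 1 (by omega)

/-- construction of almost self-dual (+)-ETGRS codes via the trace map. -/
theorem stmt19 {p r m : ℕ} (hp : p.Prime) (hpodd : Odd p)
    (hr : 0 < r) (hm : 0 < m) (hrm : r ∣ m) (heven : Even (m / r))
    {F : Type*} [Field F] [Fintype F] [DecidableEq F]
    (hF : Fintype.card F = p ^ m)
    (Tr : F → F) (hTr : ∀ x, Tr x = ∑ i ∈ Finset.range (m / r), x ^ p ^ (r * i))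
    (η : F) (hη : η ≠ 0)
    {n : ℕ} (hn : n = p ^ m - p ^ (m - r))
    (α : Fin n → F) (hα : Function.Injective α)
    (hrange : Set.range α = {x : F | Tr x ≠ 0})
    (v : Fin n → F) (hv : ∀ j, v j ≠ 0)
    (hv2 : ∀ j, v j ^ 2 = (2 * η)⁻¹ * Tr (α j)) :
    almostSelfDual (ETGRS (n / 2) n α v η) := by
  classical
  -- basic arithmetic facts
  have hp2 : 2 ≤ p := hp.two_le
  have hp3 : 3 ≤ p := by rcases hpodd with ⟨c, hc⟩; omega
  have hrm' : r ≤ m := Nat.le_of_dvd hm hrm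
  have hrt : r * (m / r) = m := Nat.mul_div_cancel' hrm
  have ht2 : 2 ≤ m / r := by
    have h1 : 1 ≤ m / r := by
      rcases Nat.eq_zero_or_pos (m / r) with h | h
      · rw [h, Nat.mul_zero] at hrt; omega
      · exact h
    rcases heven with ⟨c, hc⟩; omega
  have hrm2 : 2 * r ≤ m := by
    have h := Nat.mul_le_mul_left r ht2
    rw [hrt] at h; omega
  have hs3 : 3 ≤ p ^ (m - r) := by
    calc 3 ≤ p := hp3
    _ = p ^ 1 := (pow_one p).symm
    _ ≤ p ^ (m - r) := Nat.pow_le_pow_right (by omega) (by omega)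
  have hpr3 : 3 ≤ p ^ r := by
    calc 3 ≤ p := hp3
    _ = p ^ 1 := (pow_one p).symm
    _ ≤ p ^ r := Nat.pow_le_pow_right (by omega) (by omega)
  have hsq : p ^ (m - r) * p ^ r = p ^ m := by rw [← pow_add]; congr 1; omega
  have hnq : n + p ^ (m - r) = p ^ m := by
    have h1 : p ^ (m - r) ≤ p ^ m := Nat.pow_le_pow_right (by omega) (by omega)
    omega
  have hprodd : Odd (p ^ r) := hpodd.pow
  have hneven : Even n := by
    have h1 : Even (p ^ r - 1) := Nat.Odd.sub_odd hprodd odd_one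
    rcases h1 with ⟨c, hc⟩
    have hc' : p ^ r = c + c + 1 := by omega
    have h3 : p ^ (m - r) * p ^ r = p ^ (m - r) * c + p ^ (m - r) * c + p ^ (m - r) := by
      rw [hc']; ring
    exact ⟨p ^ (m - r) * c, by omega⟩
  have h2n : 2 ∣ n := hneven.two_dvd
  have hk2 : 2 * (n / 2) = n := Nat.mul_div_cancel' h2n
  have hn6 : 6 ≤ n := by
    have h1 : 3 * p ^ (m - r) ≤ p ^ (m - r) * p ^ r := by
      calc 3 * p ^ (m - r) ≤ p ^ r * p ^ (m - r) := Nat.mul_le_mul_right _ hpr3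
      _ = p ^ (m - r) * p ^ r := Nat.mul_comm _ _
    omega
  set k := n / 2 with hkdef
  have hkn : k < n := by omega
  have hk1' : k - 1 < k := by omega
  have hq3 : 3 ≤ Fintype.card F := by rw [hF]; omega
  -- characteristic is odd
  have hchar : ringChar F ≠ 2 := by
    intro hch
    have h1 := FiniteField.even_card_of_char_two hch
    rw [hF] at h1
    rcases hpodd.pow (n := m) with ⟨c, hc⟩
    omega
  have h2F : (2 : F) ≠ 0 := Ring.two_ne_zero hchar
  have h2η : (2 * η) ≠ 0 := mul_ne_zero h2F hη
  -- sum transport from Fin n to the set where Tr ≠ 0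
  have himg : Finset.image α Finset.univ = Finset.univ.filter (fun x => Tr x ≠ 0) := by
    apply Finset.coe_injective
    rw [Finset.coe_image, Finset.coe_univ, Set.image_univ, hrange]
    ext x; simp
  have htrans : ∀ G : F → F,
      ∑ j, G (α j) = ∑ x ∈ Finset.univ.filter (fun x => Tr x ≠ 0), G x := by
    intro G
    rw [← himg, Finset.sum_image (fun a _ b _ hab => hα hab)]
  -- the key orthogonality computation
  have key : ∀ f g : F[X], f.natDegree ≤ k → g.natDegree ≤ k →
      f.coeff k = η * f.coeff (k - 1) → g.coeff k = η * g.coeff (k - 1) →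
      ∑ j, (v j * f.eval (α j)) * (v j * g.eval (α j))
        = -(f.coeff (k - 1) * g.coeff (k - 1)) := by
    intro f g hfd hgd hft hgt
    have hhd : (f * g).natDegree ≤ n := le_trans Polynomial.natDegree_mul_le (by omega)
    have e1 : ∀ j, (v j * f.eval (α j)) * (v j * g.eval (α j))
        = (2 * η)⁻¹ * (Tr (α j) * (f * g).eval (α j)) := by
      intro j
      have h1 : (v j * f.eval (α j)) * (v j * g.eval (α j))
          = v j ^ 2 * (f * g).eval (α j) := by
        rw [Polynomial.eval_mul]; ring
      rw [h1, hv2 j]; ring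
    rw [Finset.sum_congr rfl (fun j _ => e1 j), ← Finset.mul_sum,
      htrans (fun x => Tr x * (f * g).eval x)]
    have e2 : ∑ x ∈ Finset.univ.filter (fun x => Tr x ≠ 0), Tr x * (f * g).eval x
        = ∑ x : F, Tr x * (f * g).eval x := by
      apply Finset.sum_subset (Finset.filter_subset _ _)
      intro x _ hx
      simp only [Finset.mem_filter, Finset.mem_univ, true_and, not_not] at hx
      rw [hx, zero_mul]
    rw [e2]
    have heval : ∀ x : F, (f * g).eval x
        = ∑ i ∈ Finset.range (n + 1), (f * g).coeff i * x ^ i :=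
      fun x => Polynomial.eval_eq_sum_range' (Nat.lt_succ_of_le hhd) x
    have e3 : ∑ x : F, Tr x * (f * g).eval x
        = ∑ l ∈ Finset.range (m / r), ∑ i ∈ Finset.range (n + 1),
            (f * g).coeff i * ∑ x : F, x ^ (p ^ (r * l) + i) := by
      have step1 : ∀ x : F, Tr x * (f * g).eval x
          = ∑ l ∈ Finset.range (m / r), ∑ i ∈ Finset.range (n + 1),
              (f * g).coeff i * x ^ (p ^ (r * l) + i) := by
        intro x
        rw [hTr x, heval x, Finset.sum_mul]
        refine Finset.sum_congr rfl fun l _ => ?_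
        rw [Finset.mul_sum]
        refine Finset.sum_congr rfl fun i _ => ?_
        rw [pow_add]; ring
      rw [Finset.sum_congr rfl fun x _ => step1 x, Finset.sum_comm]
      refine Finset.sum_congr rfl fun l _ => ?_
      rw [Finset.sum_comm]
      refine Finset.sum_congr rfl fun i _ => ?_
      rw [← Finset.mul_sum]
    rw [e3]
    have hterm : ∀ l ∈ Finset.range (m / r), ∀ i ∈ Finset.range (n + 1),
        (f * g).coeff i * ∑ x : F, x ^ (p ^ (r * l) + i)
        = if l = m / r - 1 then
            (if i = n - 1 then -((f * g).coeff (n - 1)) else 0) else 0 := by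
      intro l hl i hi
      simp only [Finset.mem_range] at hl hi
      have hrl1 : r * l ≤ m - r := by
        have h0 : r * l + r ≤ r * (m / r) := by
          have h00 : l + 1 ≤ m / r := hl
          calc r * l + r = r * (l + 1) := by ring
          _ ≤ r * (m / r) := Nat.mul_le_mul_left r h00
        rw [hrt] at h0; omega
      have hple : p ^ (r * l) ≤ p ^ (m - r) := Nat.pow_le_pow_right (by omega) hrl1
      have he1 : 0 < p ^ (r * l) + i := by
        have := Nat.one_le_pow (r * l) p (by omega); omega
      have he2 : p ^ (r * l) + i ≤ Fintype.card F := by rw [hF]; omega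
      rw [aux_sum_pow hq3 he1 he2, hF]
      have hmr1 : r * (m / r - 1) = m - r := by
        have h5 : r * (m / r - 1) + r = r * (m / r) := by
          have h6 : (m / r - 1) + 1 = m / r := by omega
          calc r * (m / r - 1) + r = r * ((m / r - 1) + 1) := by ring
          _ = r * (m / r) := by rw [h6]
        omega
      by_cases hcase : l = m / r - 1
      · rw [if_pos hcase]
        have hps : p ^ (r * l) = p ^ (m - r) := by rw [hcase, hmr1]
        by_cases hi1 : i = n - 1
        · rw [if_pos hi1, if_pos (by rw [hps, hi1]; omega), hi1]
          ring
        · rw [if_neg hi1, if_neg (fun hcon => by rw [hps] at hcon; omega), mul_zero]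
      · rw [if_neg hcase, if_neg ?_, mul_zero]
        intro hcon
        have hll : l + 2 ≤ m / r := by omega
        have h7 : r * l + 2 * r ≤ m := by
          calc r * l + 2 * r = r * (l + 2) := by ring
          _ ≤ r * (m / r) := Nat.mul_le_mul_left r hll
          _ = m := hrt
        have h8 : p ^ (r * l) * p ^ r = p ^ (r * l + r) := (pow_add p _ _).symm
        have h9 : p ^ (r * l + r) ≤ p ^ (m - r) := Nat.pow_le_pow_right (by omega) (by omega)
        have h10 : 3 * p ^ (r * l) ≤ p ^ (r * l) * p ^ r := by
          calc 3 * p ^ (r * l) ≤ p ^ r * p ^ (r * l) := Nat.mul_le_mul_right _ hpr3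
          _ = p ^ (r * l) * p ^ r := Nat.mul_comm _ _
        have h11 : 1 ≤ p ^ (r * l) := Nat.one_le_pow _ _ (by omega)
        omega
    rw [Finset.sum_congr rfl (fun l hl => Finset.sum_congr rfl (fun i hi => hterm l hl i hi))]
    have hsum_i : ∀ l ∈ Finset.range (m / r),
        (∑ i ∈ Finset.range (n + 1), if l = m / r - 1 then
            (if i = n - 1 then -((f * g).coeff (n - 1)) else 0) else 0)
        = if l = m / r - 1 then -((f * g).coeff (n - 1)) else 0 := by
      intro l _
      by_cases hc2 : l = m / r - 1
      · simp only [hc2, if_true]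
        rw [Finset.sum_ite_eq' (Finset.range (n + 1)) (n - 1)
          (fun _ => -((f * g).coeff (n - 1)))]
        rw [if_pos (Finset.mem_range.mpr (by omega))]
      · simp [hc2]
    rw [Finset.sum_congr rfl hsum_i,
      Finset.sum_ite_eq' (Finset.range (m / r)) (m / r - 1)
        (fun _ => -((f * g).coeff (n - 1))),
      if_pos (Finset.mem_range.mpr (by omega))]
    have hcoe : (f * g).coeff (n - 1) = 2 * η * (f.coeff (k - 1) * g.coeff (k - 1)) := by
      rw [Polynomial.coeff_mul, Finset.Nat.sum_antidiagonal_eq_sum_range_succ_mk]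
      have hsub : ({k - 1, k} : Finset ℕ) ⊆ Finset.range (n - 1 + 1) := by
        intro x hx
        simp only [Finset.mem_insert, Finset.mem_singleton] at hx
        rcases hx with rfl | rfl <;> exact Finset.mem_range.mpr (by omega)
      rw [← Finset.sum_subset hsub ?_]
      · rw [Finset.sum_pair (by omega : k - 1 ≠ k)]
        have h1 : n - 1 - (k - 1) = k := by omega
        have h2 : n - 1 - k = k - 1 := by omega
        rw [h1, h2, hft, hgt]; ring
      · intro a ha hb
        simp only [Finset.mem_insert, Finset.mem_singleton] at hb
        push_neg at hb
        simp only [Finset.mem_range] at ha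
        by_cases hak : a ≤ k
        · have h3 : k < n - 1 - a := by omega
          rw [Polynomial.coeff_eq_zero_of_natDegree_lt (lt_of_le_of_lt hgd h3), mul_zero]
        · rw [Polynomial.coeff_eq_zero_of_natDegree_lt (lt_of_le_of_lt hfd (by omega)), zero_mul]
    rw [hcoe, mul_neg, neg_inj, ← mul_assoc, inv_mul_cancel₀ h2η, one_mul]
  refine ⟨?_, ?_, ?_⟩
  · -- self-orthogonality
    intro c hc c' hc'
    obtain ⟨f, hfd, hft, rfl⟩ := hc
    obtain ⟨g, hgd, hgt, rfl⟩ := hc'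
    show ∑ i : Fin (n + 1), _ = 0
    rw [Fin.sum_univ_castSucc]
    simp only [Fin.snoc_castSucc, Fin.snoc_last]
    rw [key f g hfd hgd hft hgt]
    ring
  · exact hneven.add_one
  · -- dimension computation
    set P : (Fin k → F) → F[X] := fun a =>
      (∑ i : Fin k, Polynomial.C (a i) * Polynomial.X ^ (i : ℕ))
        + Polynomial.C (η * a ⟨k - 1, hk1'⟩) * Polynomial.X ^ k with hPdef
    have hPdeg : ∀ a, (P a).natDegree ≤ k := by
      intro a
      refine le_trans (Polynomial.natDegree_add_le _ _) (max_le ?_ ?_)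
      · refine Polynomial.natDegree_sum_le_of_forall_le _ _ fun i _ => ?_
        refine le_trans (Polynomial.natDegree_C_mul_le _ _) ?_
        rw [Polynomial.natDegree_X_pow]
        exact le_of_lt i.isLt
      · exact le_trans (Polynomial.natDegree_C_mul_le _ _)
          (le_of_eq (Polynomial.natDegree_X_pow _))
    have hPco : ∀ (a : Fin k → F) (j : Fin k), (P a).coeff (j : ℕ) = a j := by
      intro a j
      rw [hPdef]
      simp only [Polynomial.coeff_add, Polynomial.finset_sum_coeff, Polynomial.coeff_C_mul,
        Polynomial.coeff_X_pow]
      rw [Finset.sum_eq_single j]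
      · rw [if_neg (Nat.ne_of_lt j.isLt), mul_zero, add_zero, if_pos rfl, mul_one]
      · intro b _ hbj
        rw [if_neg (fun hcon => hbj (Fin.ext hcon.symm)), mul_zero]
      · intro hj; exact absurd (Finset.mem_univ j) hj
    have hPk : ∀ a : Fin k → F, (P a).coeff k = η * a ⟨k - 1, hk1'⟩ := by
      intro a
      rw [hPdef]
      simp only [Polynomial.coeff_add, Polynomial.finset_sum_coeff, Polynomial.coeff_C_mul,
        Polynomial.coeff_X_pow]
      rw [Finset.sum_eq_zero fun i _ => by
        rw [if_neg (Nat.ne_of_gt i.isLt), mul_zero]]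
      simp
    have hPadd : ∀ a b : Fin k → F, P (a + b) = P a + P b := by
      intro a b
      simp only [hPdef, Pi.add_apply, mul_add, map_add, add_mul, Finset.sum_add_distrib]
      ring
    have hPsmul : ∀ (c : F) (a : Fin k → F), P (c • a) = Polynomial.C c * P a := by
      intro c a
      simp only [hPdef, Pi.smul_apply, smul_eq_mul]
      rw [mul_add, Finset.mul_sum]
      congr 1
      · exact Finset.sum_congr rfl fun i _ => by rw [map_mul]; ring
      · rw [show η * (c * a ⟨k - 1, hk1'⟩) = c * (η * a ⟨k - 1, hk1'⟩) by ring, map_mul]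
        ring
    let φ : (Fin k → F) →ₗ[F] (Fin (n + 1) → F) :=
      { toFun := fun a => Fin.snoc (fun j => v j * (P a).eval (α j)) (a ⟨k - 1, hk1'⟩)
        map_add' := by
          intro a b
          funext i
          refine Fin.lastCases ?_ (fun j => ?_) i
          · simp [Fin.snoc_last]
          · simp only [Pi.add_apply, Fin.snoc_castSucc, hPadd, Polynomial.eval_add]
            ring
        map_smul' := by
          intro c a
          funext i
          refine Fin.lastCases ?_ (fun j => ?_) i
          · simp [Fin.snoc_last]
          · simp only [Pi.smul_apply, smul_eq_mul, Fin.snoc_castSucc, hPsmul,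
              Polynomial.eval_mul, Polynomial.eval_C, RingHom.id_apply]
            ring }
    have hrangeφ : ETGRS k n α v η = Set.range φ := by
      ext c
      constructor
      · rintro ⟨f, hfd, hft, rfl⟩
        refine ⟨fun i : Fin k => f.coeff (i : ℕ), ?_⟩
        have hPf : P (fun i : Fin k => f.coeff (i : ℕ)) = f := by
          ext j
          rcases lt_trichotomy j k with hj | hj | hj
          · exact hPco _ ⟨j, hj⟩
          · rw [hj, hPk, hft]
          · rw [Polynomial.coeff_eq_zero_of_natDegree_lt (lt_of_le_of_lt (hPdeg _) hj),
              Polynomial.coeff_eq_zero_of_natDegree_lt (lt_of_le_of_lt hfd hj)]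
        simp only [φ, LinearMap.coe_mk, AddHom.coe_mk]
        rw [hPf]
      · rintro ⟨a, rfl⟩
        refine ⟨P a, hPdeg a, ?_, ?_⟩
        · rw [hPk a]
          congr 1
          exact (hPco a ⟨k - 1, hk1'⟩).symm
        · simp only [φ, LinearMap.coe_mk, AddHom.coe_mk]
          have hcc : (P a).coeff (k - 1) = a ⟨k - 1, hk1'⟩ := hPco a ⟨k - 1, hk1'⟩
          rw [hcc]
    have hφinj : Function.Injective φ := by
      rw [← LinearMap.ker_eq_bot]
      refine LinearMap.ker_eq_bot'.mpr fun a ha => ?_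
      have hev : ∀ j : Fin n, (P a).eval (α j) = 0 := by
        intro j
        have hcast := congr_fun ha (Fin.castSucc j)
        simp only [φ, LinearMap.coe_mk, AddHom.coe_mk, Fin.snoc_castSucc,
          Pi.zero_apply] at hcast
        exact (mul_eq_zero.mp hcast).resolve_left (hv j)
      have hP0 : P a = 0 := by
        apply Polynomial.eq_zero_of_natDegree_lt_card_of_eval_eq_zero (P a) hα hev
        rw [Fintype.card_fin]
        exact lt_of_le_of_lt (hPdeg a) hkn
      funext i
      rw [Pi.zero_apply, ← hPco a i, hP0, Polynomial.coeff_zero]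
    have hdim : Module.finrank F (Submodule.span F (ETGRS k n α v η)) = k := by
      rw [hrangeφ, ← LinearMap.coe_range, Submodule.span_eq,
        LinearMap.finrank_range_of_inj hφinj, Module.finrank_fin_fun]
    show Module.finrank F (Submodule.span F (ETGRS k n α v η)) = (n + 1 - 1) / 2
    rw [hdim]
    omega
end
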